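/- arXiv:1611.08161 — 12 statements merged into one kernel-verified Lean document; each statement's English description precedes it below -/
import Mathlib

section
/- Let g : (0,∞) → ℝ be continuous and strictly increasing with g(t) → +∞ as t → +∞, and let j > 0. Then there exist a unique constant H̄ ∈ ℝ, a unique continuous 1-periodic function m : ℝ → (0,∞) with ∫₀¹ m(x) dx = 1, a unique real number p, and a unique C¹ 1-periodic function u : ℝ → ℝ with u(0) = 0, such that (u'(x)+p)²/2 + V(x) = g(m(x)) + H̄ and m(x)·(u'(x)+p) = j for all x ∈ ℝ. Necessarily, for each x, m(x) is the unique positive solution of j²/(2 m(x)²) − g(m(x)) = H̄ − V(x), p = ∫₀¹ j/m(y) dy, and u(x) = ∫₀ˣ j/m(y) dy − p x. -/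
open MeasureTheory Filter Set Topology

/-!
Eliminating `u_x + p = j / m` turns the Hamilton–Jacobi equation into the pointwise relation
`g (m x) - j² / (2 m(x)²) = V x - H`. The left side is strictly increasing in `m > 0` and runs
from `-∞` (as `m → 0`, since `j ≠ 0`) to `+∞`, so `m x = ρ (V x - H)` for a continuous strictly
increasing `ρ`. The total mass `∫₀¹ ρ (V x - H) dx` is then continuous and strictly decreasing
in `H` and takes the value `1` exactly once, which fixes `H̄` and `m`. Finally `u` is the
primitive of `j / m - p`, and periodicity of `u` forces `p = ∫₀¹ j / m`.
-/

noncomputable def currentCoupling (g : ℝ → ℝ) (j t : ℝ) : ℝ :=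
  g t - j ^ 2 / (2 * t ^ 2)

def IsMFGSolution (V g : ℝ → ℝ) (j H : ℝ) (m : ℝ → ℝ) (p : ℝ) (u : ℝ → ℝ) : Prop :=
  (∀ x, 0 < m x) ∧ Continuous m ∧ Function.Periodic m 1 ∧
    (∫ x in (0:ℝ)..1, m x) = 1 ∧
    ContDiff ℝ 1 u ∧ Function.Periodic u 1 ∧ u 0 = 0 ∧
    (∀ x, (deriv u x + p) ^ 2 / 2 + V x = g (m x) + H) ∧
    (∀ x, m x * (deriv u x + p) = j)

section Coupling

variable {g : ℝ → ℝ} {j : ℝ}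

theorem strictMonoOn_currentCoupling (hgm : StrictMonoOn g (Ioi 0)) :
    StrictMonoOn (currentCoupling g j) (Ioi 0) := by
  intro s hs t ht hst
  have hs' : (0 : ℝ) < s := hs
  have : j ^ 2 / (2 * t ^ 2) ≤ j ^ 2 / (2 * s ^ 2) := by gcongr
  unfold currentCoupling
  linarith [hgm hs ht hst]

theorem continuousOn_currentCoupling (hgc : ContinuousOn g (Ioi 0)) :
    ContinuousOn (currentCoupling g j) (Ioi 0) :=
  hgc.sub <| continuousOn_const.div (by fun_prop) fun t ht => by
    have : (0 : ℝ) < t := ht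
    positivity

theorem tendsto_currentCoupling_atTop (hgt : Tendsto g atTop atTop) :
    Tendsto (currentCoupling g j) atTop atTop := by
  refine tendsto_atTop_mono' atTop ?_ (tendsto_atTop_add_const_right _ (-(j ^ 2 / 2)) hgt)
  filter_upwards [eventually_ge_atTop 1] with t ht
  have : j ^ 2 / (2 * t ^ 2) ≤ j ^ 2 / 2 :=
    div_le_div_of_nonneg_left (by positivity) (by norm_num) (by nlinarith)
  unfold currentCoupling
  linarith

theorem tendsto_currentCoupling_nhdsGT_zero (hgm : StrictMonoOn g (Ioi 0)) (hj : j ≠ 0) :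
    Tendsto (currentCoupling g j) (𝓝[>] 0) atBot := by
  have hinv : Tendsto (fun t : ℝ => g 1 - j ^ 2 / 2 * t⁻¹) (𝓝[>] 0) atBot :=
    tendsto_atBot_add_const_left _ _ <| tendsto_neg_atTop_atBot.comp <|
      tendsto_inv_nhdsGT_zero.const_mul_atTop (by positivity)
  refine tendsto_atBot_mono' _ ?_ hinv
  filter_upwards [Ioc_mem_nhdsGT one_pos] with t ⟨ht0, ht1⟩
  have hg : g t ≤ g 1 := hgm.monotoneOn ht0 (mem_Ioi.2 one_pos) ht1
  -- `t² ≤ t` on `(0, 1]`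
  have hkin : j ^ 2 / 2 * t⁻¹ ≤ j ^ 2 / (2 * t ^ 2) := by
    rw [show j ^ 2 / 2 * t⁻¹ = j ^ 2 / (2 * t) by field_simp]
    exact div_le_div_of_nonneg_left (by positivity) (by positivity) (by nlinarith)
  unfold currentCoupling
  linarith

theorem exists_inverse_currentCoupling (hgc : ContinuousOn g (Ioi 0))
    (hgm : StrictMonoOn g (Ioi 0)) (hgt : Tendsto g atTop atTop) (hj : j ≠ 0) :
    ∃ ρ : ℝ → ℝ, Continuous ρ ∧ StrictMono ρ ∧ (∀ c, 0 < ρ c) ∧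
      ∀ c, currentCoupling g j (ρ c) = c := by
  -- in the coordinate `t = exp s` the coupling becomes an order isomorphism of `ℝ`,
  -- whose inverse is automatically continuous
  set K : ℝ → ℝ := fun s => currentCoupling g j (Real.exp s)
  have hK : StrictMono K := fun s t hst =>
    strictMonoOn_currentCoupling hgm (Real.exp_pos s) (Real.exp_pos t) (Real.exp_lt_exp.2 hst)
  have hKsurj : Function.Surjective K :=
    ((continuousOn_currentCoupling hgc).comp_continuous Real.continuous_exp
        Real.exp_pos).surjective
      ((tendsto_currentCoupling_atTop hgt).comp Real.tendsto_exp_atTop)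
      ((tendsto_currentCoupling_nhdsGT_zero hgm hj).comp Real.tendsto_exp_atBot_nhdsGT)
  set e := StrictMono.orderIsoOfSurjective K hK hKsurj
  exact ⟨fun c => Real.exp (e.symm c), Real.continuous_exp.comp e.symm.continuous,
    Real.exp_strictMono.comp e.symm.strictMono, fun c => Real.exp_pos _,
    fun c => e.apply_symm_apply c⟩

end Coupling

section TotalMass

variable {ρ V : ℝ → ℝ}

theorem continuous_integral_comp_sub (hρ : Continuous ρ) (hV : Continuous V) :
    Continuous fun H => ∫ x in (0:ℝ)..1, ρ (V x - H) :=
  intervalIntegral.continuous_parametric_intervalIntegral_of_continuous'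
    (f := fun H x => ρ (V x - H)) (by fun_prop) 0 1

theorem strictAnti_integral_comp_sub (hρ : Continuous ρ) (hρm : StrictMono ρ)
    (hV : Continuous V) : StrictAnti fun H => ∫ x in (0:ℝ)..1, ρ (V x - H) := by
  intro a b hab
  refine intervalIntegral.integral_lt_integral_of_continuousOn_of_le_of_exists_lt one_pos
    (by fun_prop) (by fun_prop) (fun x _ => (hρm (by linarith)).le) ⟨0, by simp, hρm ?_⟩
  linarith

theorem existsUnique_integral_comp_sub_eq (hρ : Continuous ρ) (hρm : StrictMono ρ)
    (hV : Continuous V) (c : ℝ) : ∃! H, ∫ x in (0:ℝ)..1, ρ (V x - H) = ρ c := by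
  set I := fun H => ∫ x in (0:ℝ)..1, ρ (V x - H)
  obtain ⟨x₁, -, hx₁⟩ := isCompact_Icc.exists_isMinOn (nonempty_Icc.2 zero_le_one) hV.continuousOn
  obtain ⟨x₂, -, hx₂⟩ := isCompact_Icc.exists_isMaxOn (nonempty_Icc.2 zero_le_one) hV.continuousOn
  have hlow : ρ c ≤ I (V x₁ - c) := by
    calc ρ c = ∫ _ in (0:ℝ)..1, ρ c := by simp
      _ ≤ I (V x₁ - c) := intervalIntegral.integral_mono_on zero_le_one
          intervalIntegrable_const ((by fun_prop : Continuous _).intervalIntegrable _ _)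
          fun x hx => hρm.monotone (by linarith [isMinOn_iff.1 hx₁ x hx])
  have hhigh : I (V x₂ - c) ≤ ρ c := by
    calc I (V x₂ - c) ≤ ∫ _ in (0:ℝ)..1, ρ c := intervalIntegral.integral_mono_on zero_le_one
          ((by fun_prop : Continuous _).intervalIntegrable _ _) intervalIntegrable_const
          fun x hx => hρm.monotone (by linarith [isMaxOn_iff.1 hx₂ x hx])
      _ = ρ c := by simp
  have hx₁₂ : V x₁ - c ≤ V x₂ - c := by
    linarith [isMinOn_iff.1 hx₁ 0 (left_mem_Icc.2 zero_le_one),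
      isMaxOn_iff.1 hx₂ 0 (left_mem_Icc.2 zero_le_one)]
  obtain ⟨H, -, hH⟩ :=
    intermediate_value_Icc' hx₁₂ (continuous_integral_comp_sub hρ hV).continuousOn ⟨hhigh, hlow⟩
  exact ⟨H, hH, fun H' hH' =>
    (strictAnti_integral_comp_sub hρ hρm hV).injective (hH'.trans hH.symm)⟩

end TotalMass

section Primitive

variable {f : ℝ → ℝ}

theorem hasDerivAt_integral_sub_mul (hf : Continuous f) (a x : ℝ) :
    HasDerivAt (fun x => (∫ y in (0:ℝ)..x, f y) - a * x) (f x - a) x :=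
  (hf.integral_hasStrictDerivAt 0 x).hasDerivAt.fun_sub
    (by simpa using (hasDerivAt_id x).const_mul a)

theorem periodic_integral_sub_mul (hf : Continuous f) (hper : Function.Periodic f 1) :
    Function.Periodic (fun x => (∫ y in (0:ℝ)..x, f y) - (∫ y in (0:ℝ)..1, f y) * x) 1 := by
  intro x
  simp only [hper.intervalIntegral_add_eq_add 0 x (hf.intervalIntegrable), zero_add]
  ring

theorem eq_integral_sub_mul_of_deriv_add_eq {u : ℝ → ℝ} {p : ℝ} (hu : Differentiable ℝ u)
    (hf : Continuous f) (hderiv : ∀ x, deriv u x + p = f x) (x : ℝ) :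
    u x = u 0 + (∫ y in (0:ℝ)..x, f y) - p * x := by
  have hderiv' : deriv u = fun y => f y - p := funext fun y => by linarith [hderiv y]
  have hFTC := intervalIntegral.integral_deriv_eq_sub (fun y _ => hu y)
    (a := 0) (b := x) (by rw [hderiv']; exact (hf.sub continuous_const).intervalIntegrable _ _)
  rw [hderiv', intervalIntegral.integral_sub (hf.intervalIntegrable _ _) intervalIntegrable_const,
    intervalIntegral.integral_const] at hFTC
  simp only [sub_zero, smul_eq_mul] at hFTC
  linarith

end Primitive

namespace IsMFGSolution

variable {V g : ℝ → ℝ} {j H p : ℝ} {m u : ℝ → ℝ}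

theorem deriv_add_eq_div (h : IsMFGSolution V g j H m p u) (x : ℝ) :
    deriv u x + p = j / m x := by
  obtain ⟨hm, -, -, -, -, -, -, -, hcur⟩ := h
  rw [eq_div_iff (hm x).ne', mul_comm, hcur x]

theorem currentCoupling_eq (h : IsMFGSolution V g j H m p u) (x : ℝ) :
    currentCoupling g j (m x) = V x - H := by
  have hder := h.deriv_add_eq_div x
  obtain ⟨-, -, -, -, -, -, -, hHJ, -⟩ := h
  have hHJx := hHJ x
  rw [hder, div_pow] at hHJx
  unfold currentCoupling
  rw [← div_div, div_right_comm]
  linarith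

theorem u_eq_integral (h : IsMFGSolution V g j H m p u) (x : ℝ) :
    u x = (∫ y in (0:ℝ)..x, j / m y) - p * x := by
  have hder := h.deriv_add_eq_div
  obtain ⟨hm, hmc, -, -, hu, -, hu0, -, -⟩ := h
  have := eq_integral_sub_mul_of_deriv_add_eq (contDiff_one_iff_deriv.1 hu).1
    (continuous_const.div hmc fun y => (hm y).ne') hder x
  rwa [hu0, zero_add] at this

theorem p_eq_integral (h : IsMFGSolution V g j H m p u) : p = ∫ y in (0:ℝ)..1, j / m y := by
  have := h.u_eq_integral 1
  obtain ⟨-, -, -, -, -, hup, hu0, -, -⟩ := h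
  rw [hup.eq, hu0] at this
  linarith

end IsMFGSolution

theorem isMFGSolution_of_currentCoupling_eq {V g : ℝ → ℝ} {j H : ℝ} {m : ℝ → ℝ}
    (hm : ∀ x, 0 < m x) (hmc : Continuous m) (hmp : Function.Periodic m 1)
    (hmass : (∫ x in (0:ℝ)..1, m x) = 1) (hcoup : ∀ x, currentCoupling g j (m x) = V x - H) :
    IsMFGSolution V g j H m (∫ y in (0:ℝ)..1, j / m y)
      (fun x => (∫ y in (0:ℝ)..x, j / m y) - (∫ y in (0:ℝ)..1, j / m y) * x) := by
  have hfc : Continuous fun y => j / m y := continuous_const.div hmc fun y => (hm y).ne'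
  have hderiv x := (hasDerivAt_integral_sub_mul hfc (∫ y in (0:ℝ)..1, j / m y) x).deriv
  refine ⟨hm, hmc, hmp, hmass, ?_, periodic_integral_sub_mul hfc fun x => by simp [hmp x],
    by simp, fun x => ?_, fun x => ?_⟩
  · exact contDiff_one_iff_deriv.2
      ⟨fun x => (hasDerivAt_integral_sub_mul hfc _ x).differentiableAt, by rw [show deriv _ = _ from funext hderiv]; exact hfc.sub continuous_const⟩
  · have := hcoup x
    unfold currentCoupling at this
    rw [hderiv, sub_add_cancel, div_pow, div_div, mul_comm (m x ^ 2)]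
    linarith
  · rw [hderiv, sub_add_cancel, mul_div_cancel₀ _ (hm x).ne']

/-- existence and uniqueness of a smooth solution of the stationary
one-dimensional MFG with increasing coupling `g` at positive current level `j`,
together with the explicit formulas it necessarily satisfies. -/
theorem stmt_0
    (V : ℝ → ℝ) (hVc : Continuous V) (hVp : Function.Periodic V 1)
    (g : ℝ → ℝ) (hgc : ContinuousOn g (Set.Ioi 0))
    (hgm : StrictMonoOn g (Set.Ioi 0))
    (hgt : Tendsto g atTop atTop)
    (j : ℝ) (hj : 0 < j) :
    (∃! q : ℝ × (ℝ → ℝ) × ℝ × (ℝ → ℝ),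
      (∀ x, 0 < q.2.1 x) ∧ Continuous q.2.1 ∧ Function.Periodic q.2.1 1 ∧
      (∫ x in (0:ℝ)..1, q.2.1 x) = 1 ∧
      ContDiff ℝ 1 q.2.2.2 ∧ Function.Periodic q.2.2.2 1 ∧ q.2.2.2 0 = 0 ∧
      (∀ x, (deriv q.2.2.2 x + q.2.2.1) ^ 2 / 2 + V x = g (q.2.1 x) + q.1) ∧
      (∀ x, q.2.1 x * (deriv q.2.2.2 x + q.2.2.1) = j)) ∧
    (∀ (H : ℝ) (m : ℝ → ℝ) (p : ℝ) (u : ℝ → ℝ),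
      ((∀ x, 0 < m x) ∧ Continuous m ∧ Function.Periodic m 1 ∧
        (∫ x in (0:ℝ)..1, m x) = 1 ∧
        ContDiff ℝ 1 u ∧ Function.Periodic u 1 ∧ u 0 = 0 ∧
        (∀ x, (deriv u x + p) ^ 2 / 2 + V x = g (m x) + H) ∧
        (∀ x, m x * (deriv u x + p) = j)) →
      (∀ x t, 0 < t → j ^ 2 / (2 * t ^ 2) - g t = H - V x → t = m x) ∧
      p = (∫ y in (0:ℝ)..1, j / m y) ∧
      ∀ x, u x = (∫ y in (0:ℝ)..x, j / m y) - p * x) := by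
  show (∃! q : ℝ × (ℝ → ℝ) × ℝ × (ℝ → ℝ), IsMFGSolution V g j q.1 q.2.1 q.2.2.1 q.2.2.2) ∧
    ∀ H m p u, IsMFGSolution V g j H m p u → _
  have hinj := (strictMonoOn_currentCoupling (j := j) hgm).injOn
  obtain ⟨ρ, hρc, hρm, hρpos, hρ⟩ := exists_inverse_currentCoupling hgc hgm hgt hj.ne'
  have hm_eq {H m p u} (h : IsMFGSolution V g j H m p u) : m = fun x => ρ (V x - H) :=
    funext fun x => hinj (h.1 x) (hρpos _) (by rw [h.currentCoupling_eq, hρ])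
  have hρ1 : ρ (currentCoupling g j 1) = 1 := hinj (hρpos _) (mem_Ioi.2 one_pos) (hρ _)
  obtain ⟨H₀, hH₀, hH₀_unique⟩ := existsUnique_integral_comp_sub_eq hρc hρm hVc
    (currentCoupling g j 1)
  rw [hρ1] at hH₀
  have hsol := isMFGSolution_of_currentCoupling_eq (fun x => hρpos _) (by fun_prop)
    (fun x => by simp only [hVp x]) hH₀ fun x => hρ _
  refine ⟨⟨(H₀, _, ∫ y in (0:ℝ)..1, j / ρ (V y - H₀), _), hsol, ?_⟩, ?_⟩
  · rintro ⟨H, m, p, u⟩ (h : IsMFGSolution V g j H m p u)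
    obtain rfl := hm_eq h
    obtain rfl := hH₀_unique H (h.2.2.2.1.trans hρ1.symm)
    have hu : u = _ := funext h.u_eq_integral
    rw [hu, h.p_eq_integral]
  · intro H m p u h
    refine ⟨fun x t ht hteq => hinj ht (h.1 x) ?_, h.p_eq_integral, h.u_eq_integral⟩
    rw [h.currentCoupling_eq, currentCoupling]
    linarith
end

section
/- There exists a unique constant H̄ ∈ ℝ such that ∫₀¹ (V(x) − H̄)⁺ dx = 1, where t⁺ = max(t,0) denotes the positive part. Moreover this H̄ satisfies ∫₀¹ V(x) dx − 1 ≤ H̄ < max V. -/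
open MeasureTheory

/-- there is a unique `H̄` with `∫₀¹ (V - H̄)⁺ = 1`, and it satisfies
`∫₀¹ V - 1 ≤ H̄ < max V`. -/
theorem stmt_1
    (V : ℝ → ℝ) (hVc : Continuous V) (hVp : Function.Periodic V 1)
    (M : ℝ) (hM : IsGreatest (Set.range V) M) :
    (∃! H : ℝ, (∫ x in (0:ℝ)..1, max (V x - H) 0) = 1) ∧
    (∀ H : ℝ, (∫ x in (0:ℝ)..1, max (V x - H) 0) = 1 →
      (∫ x in (0:ℝ)..1, V x) - 1 ≤ H ∧ H < M) := by
  obtain ⟨⟨y₀, hy₀⟩, hub⟩ := hM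
  -- a point in [0,1] where V attains M
  set x₀ : ℝ := Int.fract y₀ with hx₀def
  have hx₀mem : x₀ ∈ Set.Icc (0:ℝ) 1 :=
    ⟨Int.fract_nonneg y₀, (Int.fract_lt_one y₀).le⟩
  have hVx₀ : V x₀ = M := by
    have h := hVp.sub_int_mul_eq (x := y₀) ⌊y₀⌋
    have : x₀ = y₀ - (⌊y₀⌋ : ℝ) * 1 := by
      rw [hx₀def, Int.fract]; ring
    rw [this, h, hy₀]
  have hVle : ∀ x, V x ≤ M := fun x => hub ⟨x, rfl⟩
  set F : ℝ → ℝ := fun H => ∫ x in (0:ℝ)..1, max (V x - H) 0 with hF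
  have cont : ∀ H : ℝ, Continuous fun x => max (V x - H) 0 := fun H =>
    (hVc.sub continuous_const).max continuous_const
  have hint : ∀ H : ℝ, IntervalIntegrable (fun x => max (V x - H) 0) volume 0 1 :=
    fun H => (cont H).intervalIntegrable 0 1
  -- F is 1-Lipschitz, hence continuous
  have hlip : LipschitzWith 1 F := by
    rw [lipschitzWith_iff_dist_le_mul]
    intro H₁ H₂
    simp only [Real.dist_eq, NNReal.coe_one, one_mul]
    have h1 : F H₁ - F H₂
        = ∫ x in (0:ℝ)..1, (max (V x - H₁) 0 - max (V x - H₂) 0) :=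
      (intervalIntegral.integral_sub (hint H₁) (hint H₂)).symm
    have h2 : ‖∫ x in (0:ℝ)..1, (max (V x - H₁) 0 - max (V x - H₂) 0)‖
        ≤ |H₁ - H₂| * |1 - (0:ℝ)| := by
      apply intervalIntegral.norm_integral_le_of_norm_le_const
      intro x _
      have := abs_max_sub_max_le_abs (V x - H₁) (V x - H₂) 0
      have h3 : V x - H₁ - (V x - H₂) = H₂ - H₁ := by ring
      rw [h3] at this
      simpa [Real.norm_eq_abs, abs_sub_comm H₂ H₁] using this
    rw [h1]
    simpa [Real.norm_eq_abs] using h2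
  -- lower bound : ∫ V - H ≤ F H
  have hFge : ∀ H : ℝ, (∫ x in (0:ℝ)..1, V x) - H ≤ F H := by
    intro H
    have h1 : (∫ x in (0:ℝ)..1, V x) - H = ∫ x in (0:ℝ)..1, (V x - H) := by
      rw [intervalIntegral.integral_sub (hVc.intervalIntegrable 0 1)
        (intervalIntegrable_const)]
      simp
    rw [h1]
    apply intervalIntegral.integral_mono_on (by norm_num)
      ((hVc.sub continuous_const).intervalIntegrable 0 1) (hint H)
    intro x _
    exact le_max_left _ _
  -- upper bound : F H ≤ max (M - H) 0
  have hFle : ∀ H : ℝ, F H ≤ max (M - H) 0 := by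
    intro H
    have h1 : max (M - H) 0 = ∫ x in (0:ℝ)..1, max (M - H) 0 := by simp
    rw [h1]
    apply intervalIntegral.integral_mono_on (by norm_num) (hint H)
      intervalIntegrable_const
    intro x _
    exact max_le_max (by linarith [hVle x]) le_rfl
  -- bounds for any solution
  have hbounds : ∀ H : ℝ, F H = 1 →
      ((∫ x in (0:ℝ)..1, V x) - 1 ≤ H ∧ M - H ≥ 1) := by
    intro H hH
    constructor
    · have := hFge H; rw [hH] at this; linarith
    · have := hFle H; rw [hH] at this
      rcases le_or_gt (M - H) 0 with h | h
      · rw [max_eq_right h] at this; linarith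
      · rwa [max_eq_left h.le] at this
  -- existence via IVT
  have hMge : (∫ x in (0:ℝ)..1, V x) ≤ M := by
    have : (∫ x in (0:ℝ)..1, V x) ≤ ∫ x in (0:ℝ)..1, M := by
      apply intervalIntegral.integral_mono_on (by norm_num)
        (hVc.intervalIntegrable 0 1) intervalIntegrable_const
      intro x _; exact hVle x
    simpa using this
  have hFa : 1 ≤ F ((∫ x in (0:ℝ)..1, V x) - 2) := by
    have := hFge ((∫ x in (0:ℝ)..1, V x) - 2); linarith
  have hFb : F M = 0 := by
    have : (fun x => max (V x - M) 0) = fun _ => (0:ℝ) := by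
      funext x; exact max_eq_right (by linarith [hVle x])
    simp [hF, this]
  have hex : ∃ H : ℝ, F H = 1 := by
    have hab : (∫ x in (0:ℝ)..1, V x) - 2 ≤ M := by linarith
    have := intermediate_value_Icc' hab hlip.continuous.continuousOn
    have h1 : (1:ℝ) ∈ Set.Icc (F M) (F ((∫ x in (0:ℝ)..1, V x) - 2)) := by
      rw [hFb]; exact ⟨by norm_num, hFa⟩
    obtain ⟨H, _, hH⟩ := this h1
    exact ⟨H, hH⟩
  -- strict monotonicity on solutions ⇒ uniqueness
  have hmono : ∀ H₁ H₂ : ℝ, F H₁ = 1 → F H₂ = 1 → ¬ H₁ < H₂ := by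
    intro H₁ H₂ h₁ h₂ hlt
    have hb₂ := (hbounds H₂ h₂).2
    have hkey : F H₂ < F H₁ := by
      apply intervalIntegral.integral_lt_integral_of_continuousOn_of_le_of_exists_lt
        (by norm_num) (cont H₂).continuousOn (cont H₁).continuousOn
      · intro x _
        exact max_le_max (by linarith) le_rfl
      · refine ⟨x₀, hx₀mem, ?_⟩
        rw [hVx₀, max_eq_left (by linarith), max_eq_left (by linarith)]
        linarith
    rw [h₁, h₂] at hkey; exact lt_irrefl 1 hkey
  obtain ⟨H₀, hH₀⟩ := hex
  refine ⟨⟨H₀, hH₀, fun H hH => ?_⟩, fun H hH => ⟨(hbounds H hH).1, by linarith [(hbounds H hH).2]⟩⟩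
  rcases lt_trichotomy H H₀ with h | h | h
  · exact absurd h (hmono H H₀ hH hH₀)
  · exact h
  · exact absurd h (hmono H₀ H hH₀ hH)
end

section
/- Let j > 0 and suppose α⁻(j) = ∫₀¹ m⁻_{H_j^{cr}}(x) dx ≥ 1. Then there exists a unique H̄ ≥ H_j^{cr} such that ∫₀¹ m⁻_{H̄}(x) dx = 1. -/
open MeasureTheory

lemma quant {c a b : ℝ} (hc : 0 < c) (ha : 0 < a) (hab : a ≤ b) (hbc : b ≤ c) :
    (b - a) ^ 2 ≤ 2 * c * ((c ^ 3 / (2 * a ^ 2) + a) - (c ^ 3 / (2 * b ^ 2) + b)) := by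
  have hb : 0 < b := lt_of_lt_of_le ha hab
  have hac : a ≤ c := hab.trans hbc
  have e : (c ^ 3 / (2 * a ^ 2) + a) - (c ^ 3 / (2 * b ^ 2) + b)
      = (c ^ 3 * (b ^ 2 - a ^ 2) - 2 * a ^ 2 * b ^ 2 * (b - a)) / (2 * a ^ 2 * b ^ 2) := by
    field_simp
    ring
  rw [e, ← mul_div_assoc, le_div_iff₀ (by positivity)]
  have hba : 0 ≤ b - a := sub_nonneg.2 hab
  have hcb : 0 ≤ c - b := sub_nonneg.2 hbc
  have hca : 0 ≤ c - a := sub_nonneg.2 hac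
  have h1 : 0 ≤ (b - a) * (c ^ 3 * b * (c - b)) := by
    apply mul_nonneg hba; apply mul_nonneg (by positivity) hcb
  have h2 : 0 ≤ (b - a) * (a * c ^ 2 * (c - b) * (c + 2 * b)) := by
    apply mul_nonneg hba
    apply mul_nonneg (mul_nonneg (by positivity) hcb) (by positivity)
  have h3 : 0 ≤ (b - a) * (a * b ^ 2 * (c - a) * c) := by
    apply mul_nonneg hba
    apply mul_nonneg (mul_nonneg (by positivity) hca) hc.le
  have h4 : 0 ≤ b * (b - a) ^ 2 * (c ^ 3 - a ^ 2 * b) := by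
    apply mul_nonneg (by positivity)
    have k1 : a ^ 2 ≤ c ^ 2 := by nlinarith
    have k2 : a ^ 2 * b ≤ c ^ 2 * c := by nlinarith
    nlinarith [k2]
  linarith [h1, h2, h3, h4]

/-- Order and Hölder-1/2 estimate for the small branch. -/
lemma order_est {c A B a b : ℝ} (hc : 0 < c) (ha : 0 < a) (hac : a ≤ c)
    (hb : 0 < b) (hbc : b ≤ c)
    (hA : c ^ 3 / (2 * a ^ 2) + a = A) (hB : c ^ 3 / (2 * b ^ 2) + b = B)
    (hAB : A ≤ B) : b ≤ a ∧ (a - b) ^ 2 ≤ 2 * c * (B - A) := by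
  have hba : b ≤ a := by
    by_contra h
    push_neg at h
    have := quant hc ha h.le hbc
    rw [hA, hB] at this
    nlinarith [sq_nonneg (b - a)]
  refine ⟨hba, ?_⟩
  have := quant hc hb hba hac
  rw [hA, hB] at this
  linarith [this]

/-- if `α⁻(j) ≥ 1` then there is a unique `H̄ ≥ H_j^{cr}` with
`∫₀¹ m⁻_{H̄} = 1`. Here `m⁻_H(x)` is the small branch of solutions of
`j²/(2t²) + t = H − V(x)`. -/
theorem stmt_6
    (V : ℝ → ℝ) (hVc : Continuous V) (hVp : Function.Periodic V 1)
    (M : ℝ) (hM : IsGreatest (Set.range V) M)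
    (j : ℝ) (hj : 0 < j)
    (mm : ℝ → ℝ → ℝ)
    (hmm : ∀ H x, M + 3 / 2 * j ^ ((2:ℝ)/3) ≤ H →
      0 < mm H x ∧ mm H x ≤ j ^ ((2:ℝ)/3) ∧
      j ^ 2 / (2 * (mm H x) ^ 2) + mm H x = H - V x)
    (hα : 1 ≤ (∫ x in (0:ℝ)..1, mm (M + 3 / 2 * j ^ ((2:ℝ)/3)) x)) :
    ∃! H : ℝ, M + 3 / 2 * j ^ ((2:ℝ)/3) ≤ H ∧
      (∫ x in (0:ℝ)..1, mm H x) = 1 := by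
  set c : ℝ := j ^ ((2:ℝ)/3) with hcdef
  have hc : 0 < c := Real.rpow_pos_of_pos hj _
  have hc3 : c ^ 3 = j ^ 2 := by
    rw [hcdef, ← Real.rpow_natCast (j ^ ((2:ℝ)/3)) 3, ← Real.rpow_mul hj.le,
      ← Real.rpow_natCast j 2]
    norm_num
  set Hcr : ℝ := M + 3 / 2 * c with hHcr
  -- basic properties of the small branch, in terms of `c`
  have key : ∀ H, Hcr ≤ H → ∀ x, 0 < mm H x ∧ mm H x ≤ c ∧
      c ^ 3 / (2 * (mm H x) ^ 2) + mm H x = H - V x := by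
    intro H hH x
    obtain ⟨h1, h2, h3⟩ := hmm H x hH
    exact ⟨h1, h2, by rw [hc3]; exact h3⟩
  -- monotonicity in `H` with Hölder-1/2 estimate
  have stepH : ∀ H H', Hcr ≤ H → H ≤ H' → ∀ x,
      mm H' x ≤ mm H x ∧ (mm H x - mm H' x) ^ 2 ≤ 2 * c * (H' - H) := by
    intro H H' hH hHH' x
    obtain ⟨a1, a2, a3⟩ := key H hH x
    obtain ⟨b1, b2, b3⟩ := key H' (hH.trans hHH') x
    have h := order_est hc a1 a2 b1 b2 a3 b3 (by linarith)
    refine ⟨h.1, ?_⟩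
    calc (mm H x - mm H' x) ^ 2 ≤ 2 * c * ((H' - V x) - (H - V x)) := h.2
      _ = 2 * c * (H' - H) := by ring
  -- Hölder-1/2 estimate in `x`
  have estx : ∀ H, Hcr ≤ H → ∀ x y,
      (mm H x - mm H y) ^ 2 ≤ 2 * c * |V x - V y| := by
    intro H hH x y
    obtain ⟨a1, a2, a3⟩ := key H hH x
    obtain ⟨b1, b2, b3⟩ := key H hH y
    rcases le_total (V x) (V y) with hle | hle
    · have h := order_est hc b1 b2 a1 a2 b3 a3 (by linarith)
      have habs : |V x - V y| = V y - V x := by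
        rw [abs_sub_comm, abs_of_nonneg (sub_nonneg.2 hle)]
      calc (mm H x - mm H y) ^ 2 = (mm H y - mm H x) ^ 2 := by ring
        _ ≤ 2 * c * ((H - V x) - (H - V y)) := h.2
        _ = 2 * c * |V x - V y| := by rw [habs]; ring
    · have h := order_est hc a1 a2 b1 b2 a3 b3 (by linarith)
      have habs : |V x - V y| = V x - V y := abs_of_nonneg (sub_nonneg.2 hle)
      calc (mm H x - mm H y) ^ 2 ≤ 2 * c * ((H - V y) - (H - V x)) := h.2
        _ = 2 * c * |V x - V y| := by rw [habs]; ring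
  -- continuity in `x`
  have contx : ∀ H, Hcr ≤ H → Continuous (fun x => mm H x) := by
    intro H hH
    rw [Metric.continuous_iff]
    intro x₀ ε hε
    obtain ⟨δ, hδ, hV⟩ := Metric.continuous_iff.mp hVc x₀ (ε ^ 2 / (2 * c)) (by positivity)
    refine ⟨δ, hδ, fun x hx => ?_⟩
    have h2 := hV x hx
    rw [Real.dist_eq] at h2 ⊢
    have h3 : |mm H x - mm H x₀| ^ 2 < ε ^ 2 := by
      rw [sq_abs]
      calc (mm H x - mm H x₀) ^ 2 ≤ 2 * c * |V x - V x₀| := estx H hH x x₀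
        _ < 2 * c * (ε ^ 2 / (2 * c)) := by
            exact mul_lt_mul_of_pos_left h2 (by positivity)
        _ = ε ^ 2 := by field_simp
    exact lt_of_pow_lt_pow_left₀ 2 hε.le h3
  have intg : ∀ H, Hcr ≤ H → IntervalIntegrable (fun x => mm H x) volume 0 1 :=
    fun H hH => (contx H hH).intervalIntegrable 0 1
  -- strict monotonicity of the integral
  have strict : ∀ H H', Hcr ≤ H → H < H' →
      (∫ x in (0:ℝ)..1, mm H' x) < (∫ x in (0:ℝ)..1, mm H x) := by
    intro H H' hH hlt
    have hH' : Hcr ≤ H' := hH.trans hlt.le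
    have pos : 0 < ∫ x in (0:ℝ)..1, (mm H x - mm H' x) := by
      apply intervalIntegral.intervalIntegral_pos_of_pos_on
      · exact ((contx H hH).sub (contx H' hH')).intervalIntegrable 0 1
      · intro x _
        have h1 := (stepH H H' hH hlt.le x).1
        rcases eq_or_lt_of_le h1 with heq | hlt2
        · exfalso
          obtain ⟨a1, a2, a3⟩ := key H hH x
          obtain ⟨b1, b2, b3⟩ := key H' hH' x
          rw [heq] at b3
          linarith
        · linarith
      · norm_num
    rw [intervalIntegral.integral_sub (intg H hH) (intg H' hH')] at pos
    linarith
  -- Hölder-1/2 continuity of the integral in `H`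
  have Fdiff : ∀ H H', Hcr ≤ H → H ≤ H' →
      |(∫ x in (0:ℝ)..1, mm H x) - (∫ x in (0:ℝ)..1, mm H' x)|
        ≤ Real.sqrt (2 * c * (H' - H)) := by
    intro H H' hH hHH'
    have hH' : Hcr ≤ H' := hH.trans hHH'
    rw [← intervalIntegral.integral_sub (intg H hH) (intg H' hH')]
    have hb : ∀ x ∈ Set.uIoc (0:ℝ) 1, ‖mm H x - mm H' x‖ ≤ Real.sqrt (2 * c * (H' - H)) := by
      intro x _
      rw [Real.norm_eq_abs, Real.le_sqrt (abs_nonneg _) (by nlinarith), sq_abs]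
      exact (stepH H H' hH hHH' x).2
    have := intervalIntegral.norm_integral_le_of_norm_le_const hb
    simpa using this
  have Fdiff2 : ∀ H H', Hcr ≤ H → Hcr ≤ H' →
      |(∫ x in (0:ℝ)..1, mm H' x) - (∫ x in (0:ℝ)..1, mm H x)|
        ≤ Real.sqrt (2 * c * |H' - H|) := by
    intro H H' hH hH'
    rcases le_total H H' with hle | hle
    · rw [abs_of_nonneg (sub_nonneg.2 hle), abs_sub_comm]
      exact Fdiff H H' hH hle
    · rw [abs_of_nonpos (sub_nonpos.2 hle),
        show 2 * c * -(H' - H) = 2 * c * (H - H') from by ring]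
      exact Fdiff H' H hH' hle
  set H₁ : ℝ := Hcr + c ^ 3 with hH₁def
  have hH₁ : Hcr ≤ H₁ := by nlinarith [pow_pos hc 3]
  have contF : ContinuousOn (fun H => ∫ x in (0:ℝ)..1, mm H x) (Set.Icc Hcr H₁) := by
    rw [Metric.continuousOn_iff]
    intro H hHmem ε hε
    refine ⟨ε ^ 2 / (2 * c), by positivity, fun H' hH'mem hdist => ?_⟩
    rw [Real.dist_eq] at hdist ⊢
    calc |(∫ x in (0:ℝ)..1, mm H' x) - (∫ x in (0:ℝ)..1, mm H x)|
        ≤ Real.sqrt (2 * c * |H' - H|) := Fdiff2 H H' hHmem.1 hH'mem.1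
      _ < Real.sqrt (ε ^ 2) := by
          apply Real.sqrt_lt_sqrt (by positivity)
          calc 2 * c * |H' - H| < 2 * c * (ε ^ 2 / (2 * c)) :=
              mul_lt_mul_of_pos_left hdist (by positivity)
            _ = ε ^ 2 := by field_simp
      _ = ε := Real.sqrt_sq hε.le
  -- upper bound at H₁
  have hub : ∀ x, mm H₁ x ≤ 3 / 4 := by
    intro x
    obtain ⟨a1, a2, a3⟩ := key H₁ hH₁ x
    have hVx : V x ≤ M := hM.2 ⟨x, rfl⟩
    have h1 : c ^ 3 + c / 2 ≤ c ^ 3 / (2 * (mm H₁ x) ^ 2) := by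
      have e : c ^ 3 / (2 * (mm H₁ x) ^ 2) = H₁ - V x - mm H₁ x := by linarith
      rw [e, hH₁def, hHcr]
      linarith
    have h2 := (le_div_iff₀ (by positivity : (0:ℝ) < 2 * (mm H₁ x) ^ 2)).mp h1
    have h3 : (mm H₁ x) ^ 2 ≤ 1 / 2 := by nlinarith [pow_pos hc 3]
    nlinarith [a1]
  have hF1 : (∫ x in (0:ℝ)..1, mm H₁ x) ≤ 3 / 4 := by
    calc (∫ x in (0:ℝ)..1, mm H₁ x) ≤ ∫ _ in (0:ℝ)..1, (3/4 : ℝ) :=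
        intervalIntegral.integral_mono_on (by norm_num) (intg H₁ hH₁)
          intervalIntegrable_const (fun x _ => hub x)
      _ = 3 / 4 := by simp
  -- intermediate value theorem
  have hsub := intermediate_value_Icc' hH₁ contF
  have h1mem : (1:ℝ) ∈ Set.Icc (∫ x in (0:ℝ)..1, mm H₁ x) (∫ x in (0:ℝ)..1, mm Hcr x) :=
    ⟨by linarith, hα⟩
  obtain ⟨Hb, hmem, hFH'⟩ := hsub h1mem
  have hFH : (∫ x in (0:ℝ)..1, mm Hb x) = 1 := hFH'
  refine ⟨Hb, ⟨hmem.1, hFH⟩, ?_⟩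
  rintro H' ⟨h1, h2⟩
  rcases lt_trichotomy H' Hb with h | h | h
  · have := strict H' Hb h1 h
    rw [hFH, h2] at this
    linarith
  · exact h
  · have := strict Hb H' hmem.1 h
    rw [hFH, h2] at this
    linarith
end

section
/- Suppose that V attains its maximum over [0,1) only at x = 0. Let j > 0 and suppose α⁻(j) < 1 < α⁺(j). Then there exists a unique d ∈ (0,1) such that ∫₀^d m⁻_j(x) dx + ∫_d^1 m⁺_j(x) dx = 1. -/
open MeasureTheory

private lemma phi_lt_lo {j a s t : ℝ} (ha : 0 < a) (haj : a ^ 3 = j ^ 2)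
    (hs : 0 < s) (hst : s < t) (hta : t ≤ a) :
    j ^ 2 / (2 * t ^ 2) + t < j ^ 2 / (2 * s ^ 2) + s := by
  have ht : 0 < t := hs.trans hst
  have hsa : s < a := hst.trans_le hta
  have key : s * t < a ^ 2 := by nlinarith
  rw [div_add' _ _ _ (by positivity), div_add' _ _ _ (by positivity),
    div_lt_div_iff₀ (by positivity) (by positivity)]
  nlinarith [mul_pos (mul_pos (sub_pos.2 hst) (mul_pos ha (by linarith : (0:ℝ) < s + t)))
      (sub_pos.2 key),
    mul_nonneg (mul_nonneg (mul_nonneg (sub_pos.2 hst).le (mul_pos hs ht).le) hs.le)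
      (sub_nonneg.2 hta),
    mul_nonneg (mul_nonneg (mul_nonneg (sub_pos.2 hst).le (mul_pos hs ht).le) ht.le)
      (sub_nonneg.2 hsa.le)]

private lemma phi_lt_hi {j a s t : ℝ} (ha : 0 < a) (haj : a ^ 3 = j ^ 2)
    (has : a ≤ s) (hst : s < t) :
    j ^ 2 / (2 * s ^ 2) + s < j ^ 2 / (2 * t ^ 2) + t := by
  have hs : 0 < s := ha.trans_le has
  have ht : 0 < t := hs.trans hst
  have hat : a < t := has.trans_lt hst
  have key : a ^ 2 < s * t := by nlinarith
  rw [div_add' _ _ _ (by positivity), div_add' _ _ _ (by positivity),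
    div_lt_div_iff₀ (by positivity) (by positivity)]
  nlinarith [mul_pos (mul_pos (sub_pos.2 hst) (mul_pos ha (by linarith : (0:ℝ) < s + t)))
      (sub_pos.2 key),
    mul_nonneg (mul_nonneg (mul_nonneg (sub_pos.2 hst).le (mul_pos hs ht).le) hs.le)
      (sub_nonneg.2 hat.le),
    mul_nonneg (mul_nonneg (mul_nonneg (sub_pos.2 hst).le (mul_pos hs ht).le) ht.le)
      (sub_nonneg.2 has)]

private lemma key_lo {j a s t : ℝ} (ha : 0 < a) (haj : a ^ 3 = j ^ 2)
    (hs : 0 < s) (hsa : s ≤ a) (ht : 0 < t) (hta : t ≤ a)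
    (h : j ^ 2 / (2 * s ^ 2) + s < j ^ 2 / (2 * t ^ 2) + t) : t < s := by
  rcases lt_trichotomy t s with h' | h' | h'
  · exact h'
  · exact absurd h (by rw [h']; exact lt_irrefl _)
  · exact absurd (phi_lt_lo ha haj hs h' hta) (not_lt.2 h.le)

private lemma key_hi {j a s t : ℝ} (ha : 0 < a) (haj : a ^ 3 = j ^ 2)
    (has : a ≤ s) (hat : a ≤ t)
    (h : j ^ 2 / (2 * s ^ 2) + s < j ^ 2 / (2 * t ^ 2) + t) : s < t := by
  rcases lt_trichotomy s t with h' | h' | h'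
  · exact h'
  · exact absurd h (by rw [h']; exact lt_irrefl _)
  · exact absurd (phi_lt_hi ha haj hat h') (not_lt.2 h.le)

private lemma cont_lo {V : ℝ → ℝ} (hVc : Continuous V) {j a H : ℝ} (ha : 0 < a)
    (haj : a ^ 3 = j ^ 2) {m : ℝ → ℝ}
    (hm : ∀ x, 0 < m x ∧ m x ≤ a ∧ j ^ 2 / (2 * (m x) ^ 2) + m x = H - V x) :
    Continuous m := by
  rw [continuous_iff_continuousAt]
  intro x₀
  rw [Metric.continuousAt_iff]
  intro ε hε
  obtain ⟨h0, hle, heq⟩ := hm x₀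
  -- lower control
  obtain ⟨δ₁, hδ₁pos, hδ₁⟩ : ∃ δ₁ > (0:ℝ), ∀ x,
      H - V x < H - V x₀ + δ₁ → m x₀ - ε < m x := by
    have ht₁0 : 0 < max (m x₀ / 2) (m x₀ - ε / 2) := lt_max_of_lt_left (by linarith)
    have ht₁lt : max (m x₀ / 2) (m x₀ - ε / 2) < m x₀ := max_lt (by linarith) (by linarith)
    have hφ₁ := phi_lt_lo ha haj ht₁0 ht₁lt hle
    refine ⟨(j ^ 2 / (2 * (max (m x₀ / 2) (m x₀ - ε / 2)) ^ 2)
      + max (m x₀ / 2) (m x₀ - ε / 2)) - (H - V x₀), by linarith, ?_⟩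
    intro x hx
    obtain ⟨h1, h2, h3⟩ := hm x
    have hgt : j ^ 2 / (2 * (m x) ^ 2) + m x
        < j ^ 2 / (2 * (max (m x₀ / 2) (m x₀ - ε / 2)) ^ 2)
          + max (m x₀ / 2) (m x₀ - ε / 2) := by rw [h3]; linarith
    have := key_lo ha haj h1 h2 ht₁0 (ht₁lt.le.trans hle) hgt
    have := le_max_right (m x₀ / 2) (m x₀ - ε / 2)
    linarith
  -- upper control
  obtain ⟨δ₂, hδ₂pos, hδ₂⟩ : ∃ δ₂ > (0:ℝ), ∀ x,
      H - V x₀ - δ₂ < H - V x → m x < m x₀ + ε := by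
    rcases eq_or_lt_of_le hle with hEq | hlt'
    · exact ⟨1, one_pos, fun x _ => by
        have := (hm x).2.1; rw [← hEq] at this; linarith⟩
    · have h2gt : m x₀ < min a (m x₀ + ε / 2) := lt_min hlt' (by linarith)
      have h2a : min a (m x₀ + ε / 2) ≤ a := min_le_left _ _
      have hφ₂ := phi_lt_lo ha haj h0 h2gt h2a
      refine ⟨(H - V x₀) - (j ^ 2 / (2 * (min a (m x₀ + ε / 2)) ^ 2)
        + min a (m x₀ + ε / 2)), by linarith, ?_⟩
      intro x hx
      obtain ⟨h1, h2, h3⟩ := hm x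
      have hgt : j ^ 2 / (2 * (min a (m x₀ + ε / 2)) ^ 2) + min a (m x₀ + ε / 2)
          < j ^ 2 / (2 * (m x) ^ 2) + m x := by rw [h3]; linarith
      have := key_lo ha haj (lt_min ha (by linarith)) h2a h1 h2 hgt
      have := min_le_right a (m x₀ + ε / 2)
      linarith
  have hVca := hVc.continuousAt (x := x₀)
  rw [Metric.continuousAt_iff] at hVca
  obtain ⟨δ, hδpos, hδ⟩ := hVca (min δ₁ δ₂) (lt_min hδ₁pos hδ₂pos)
  refine ⟨δ, hδpos, fun {x} hx => ?_⟩
  have hd := hδ hx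
  rw [Real.dist_eq] at hd ⊢
  have hVd := abs_lt.1 hd
  have hm1 : min δ₁ δ₂ ≤ δ₁ := min_le_left _ _
  have hm2 : min δ₁ δ₂ ≤ δ₂ := min_le_right _ _
  rw [abs_sub_lt_iff]
  constructor
  · have := hδ₂ x (by linarith [hVd.2])
    linarith
  · have := hδ₁ x (by linarith [hVd.1])
    linarith

private lemma cont_hi {V : ℝ → ℝ} (hVc : Continuous V) {j a H : ℝ} (ha : 0 < a)
    (haj : a ^ 3 = j ^ 2) {m : ℝ → ℝ}
    (hm : ∀ x, a ≤ m x ∧ j ^ 2 / (2 * (m x) ^ 2) + m x = H - V x) :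
    Continuous m := by
  rw [continuous_iff_continuousAt]
  intro x₀
  rw [Metric.continuousAt_iff]
  intro ε hε
  obtain ⟨hle, heq⟩ := hm x₀
  -- upper control
  obtain ⟨δ₂, hδ₂pos, hδ₂⟩ : ∃ δ₂ > (0:ℝ), ∀ x,
      H - V x < H - V x₀ + δ₂ → m x < m x₀ + ε := by
    have hφ₂ := phi_lt_hi ha haj hle (by linarith : m x₀ < m x₀ + ε / 2)
    refine ⟨(j ^ 2 / (2 * (m x₀ + ε / 2) ^ 2) + (m x₀ + ε / 2)) - (H - V x₀),
      by linarith, ?_⟩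
    intro x hx
    obtain ⟨h1, h2⟩ := hm x
    have hgt : j ^ 2 / (2 * (m x) ^ 2) + m x
        < j ^ 2 / (2 * (m x₀ + ε / 2) ^ 2) + (m x₀ + ε / 2) := by rw [h2]; linarith
    have := key_hi ha haj h1 (by linarith : a ≤ m x₀ + ε / 2) hgt
    linarith
  -- lower control
  obtain ⟨δ₁, hδ₁pos, hδ₁⟩ : ∃ δ₁ > (0:ℝ), ∀ x,
      H - V x₀ - δ₁ < H - V x → m x₀ - ε < m x := by
    rcases eq_or_lt_of_le hle with hEq | hlt'
    · exact ⟨1, one_pos, fun x _ => by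
        have := (hm x).1; rw [hEq] at this; linarith⟩
    · have h1lt : max a (m x₀ - ε / 2) < m x₀ := max_lt hlt' (by linarith)
      have h1a : a ≤ max a (m x₀ - ε / 2) := le_max_left _ _
      have hφ₁ := phi_lt_hi ha haj h1a h1lt
      refine ⟨(H - V x₀) - (j ^ 2 / (2 * (max a (m x₀ - ε / 2)) ^ 2)
        + max a (m x₀ - ε / 2)), by linarith, ?_⟩
      intro x hx
      obtain ⟨h1, h2⟩ := hm x
      have hgt : j ^ 2 / (2 * (max a (m x₀ - ε / 2)) ^ 2) + max a (m x₀ - ε / 2)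
          < j ^ 2 / (2 * (m x) ^ 2) + m x := by rw [h2]; linarith
      have := key_hi ha haj h1a h1 hgt
      have := le_max_right a (m x₀ - ε / 2)
      linarith
  have hVca := hVc.continuousAt (x := x₀)
  rw [Metric.continuousAt_iff] at hVca
  obtain ⟨δ, hδpos, hδ⟩ := hVca (min δ₁ δ₂) (lt_min hδ₁pos hδ₂pos)
  refine ⟨δ, hδpos, fun {x} hx => ?_⟩
  have hd := hδ hx
  rw [Real.dist_eq] at hd ⊢
  have hVd := abs_lt.1 hd
  have hm1 : min δ₁ δ₂ ≤ δ₁ := min_le_left _ _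
  have hm2 : min δ₁ δ₂ ≤ δ₂ := min_le_right _ _
  rw [abs_sub_lt_iff]
  constructor
  · have := hδ₂ x (by linarith [hVd.1])
    linarith
  · have := hδ₁ x (by linarith [hVd.2])
    linarith

/-- if `V` attains its maximum on `[0,1)` only at `0` and
`α⁻(j) < 1 < α⁺(j)`, then there is a unique jump point `d ∈ (0,1)` with
`∫₀^d m⁻_j + ∫_d^1 m⁺_j = 1`. Here `m⁻_j, m⁺_j` are the two branches of
solutions of `j²/(2t²) + t = H_j^{cr} − V(x)` at the critical level
`H_j^{cr} = max V + (3/2) j^{2/3}`. -/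
theorem stmt_7
    (V : ℝ → ℝ) (hVc : Continuous V) (hVp : Function.Periodic V 1)
    (M : ℝ) (hM : IsGreatest (Set.range V) M)
    (hV0 : V 0 = M) (hVuniq : ∀ x ∈ Set.Ico (0:ℝ) 1, V x = M → x = 0)
    (j : ℝ) (hj : 0 < j)
    (mm mp : ℝ → ℝ)
    (hmm : ∀ x, 0 < mm x ∧ mm x ≤ j ^ ((2:ℝ)/3) ∧
      j ^ 2 / (2 * (mm x) ^ 2) + mm x = (M + 3 / 2 * j ^ ((2:ℝ)/3)) - V x)
    (hmp : ∀ x, j ^ ((2:ℝ)/3) ≤ mp x ∧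
      j ^ 2 / (2 * (mp x) ^ 2) + mp x = (M + 3 / 2 * j ^ ((2:ℝ)/3)) - V x)
    (hαm : (∫ x in (0:ℝ)..1, mm x) < 1)
    (hαp : 1 < (∫ x in (0:ℝ)..1, mp x)) :
    ∃! d : ℝ, d ∈ Set.Ioo (0:ℝ) 1 ∧
      (∫ x in (0:ℝ)..d, mm x) + (∫ x in d..1, mp x) = 1 := by
  have ha : 0 < j ^ ((2:ℝ)/3) := Real.rpow_pos_of_pos hj _
  have haj : (j ^ ((2:ℝ)/3)) ^ 3 = j ^ 2 := by
    rw [← Real.rpow_natCast (j ^ ((2:ℝ)/3)) 3, ← Real.rpow_mul hj.le,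
      ← Real.rpow_natCast j 2]
    norm_num
  have hcm : Continuous mm := cont_lo hVc ha haj hmm
  have hcp : Continuous mp := cont_hi hVc ha haj hmp
  -- phi at the critical point
  have hphia : j ^ 2 / (2 * (j ^ ((2:ℝ)/3)) ^ 2) + j ^ ((2:ℝ)/3)
      = 3 / 2 * j ^ ((2:ℝ)/3) := by
    rw [← haj]; field_simp; ring
  -- strict inequality on (0,1)
  have hlt : ∀ x ∈ Set.Ioo (0:ℝ) 1, mm x < mp x := by
    intro x hx
    have hVx : V x < M := by
      rcases lt_or_eq_of_le (hM.2 ⟨x, rfl⟩) with h | h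
      · exact h
      · exact absurd (hVuniq x ⟨hx.1.le, hx.2⟩ h) (ne_of_gt hx.1)
    obtain ⟨h1, h2, h3⟩ := hmm x
    obtain ⟨h4, h5⟩ := hmp x
    have hmma : mm x < j ^ ((2:ℝ)/3) := by
      rcases lt_or_eq_of_le h2 with h | h
      · exact h
      · rw [h, hphia] at h3; linarith
    have hmpa : j ^ ((2:ℝ)/3) < mp x := by
      rcases lt_or_eq_of_le h4 with h | h
      · exact h
      · rw [← h, hphia] at h5; linarith
    linarith
  -- the function F
  set F : ℝ → ℝ := fun d => (∫ x in (0:ℝ)..d, mm x) + (∫ x in d..1, mp x) with hF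
  have hFeq : F = fun d => ((∫ x in (0:ℝ)..d, mm x) - (∫ x in (0:ℝ)..d, mp x))
      + (∫ x in (0:ℝ)..1, mp x) := by
    funext d
    have h := intervalIntegral.integral_add_adjacent_intervals
      (hcp.intervalIntegrable 0 d : IntervalIntegrable mp volume 0 d)
      (hcp.intervalIntegrable d 1)
    simp only [hF]
    linarith
  have hderiv : ∀ d : ℝ, HasDerivAt F (mm d - mp d) d := by
    intro d
    have h1 : HasDerivAt (fun u => ∫ x in (0:ℝ)..u, mm x) (mm d) d :=
      intervalIntegral.integral_hasDerivAt_right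
        (hcm.intervalIntegrable 0 d : IntervalIntegrable mm volume 0 d)
        hcm.stronglyMeasurable.stronglyMeasurableAtFilter hcm.continuousAt
    have h2 : HasDerivAt (fun u => ∫ x in (0:ℝ)..u, mp x) (mp d) d :=
      intervalIntegral.integral_hasDerivAt_right
        (hcp.intervalIntegrable 0 d : IntervalIntegrable mp volume 0 d)
        hcp.stronglyMeasurable.stronglyMeasurableAtFilter hcp.continuousAt
    rw [hFeq]
    exact (h1.sub h2).add_const _
  have hFc : Continuous F := continuous_iff_continuousAt.2
    fun d => (hderiv d).continuousAt
  have hanti : StrictAntiOn F (Set.Icc 0 1) := by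
    apply strictAntiOn_of_deriv_neg (convex_Icc 0 1) hFc.continuousOn
    intro x hx
    rw [interior_Icc] at hx
    rw [(hderiv x).deriv]
    linarith [hlt x hx]
  have hF0 : F 0 = ∫ x in (0:ℝ)..1, mp x := by simp [hF]
  have hF1 : F 1 = ∫ x in (0:ℝ)..1, mm x := by simp [hF]
  have hmem : (1:ℝ) ∈ Set.Ioo (F 1) (F 0) := by rw [hF0, hF1]; exact ⟨hαm, hαp⟩
  obtain ⟨d, hd, hFd⟩ := intermediate_value_Ioo' (by norm_num : (0:ℝ) ≤ 1)
    hFc.continuousOn hmem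
  refine ⟨d, ⟨hd, hFd⟩, ?_⟩
  rintro e ⟨he, hFe⟩
  exact hanti.injOn (Set.Ioo_subset_Icc_self he) (Set.Ioo_subset_Icc_self hd)
    (hFe.trans hFd.symm)
end

section
/- Suppose that V attains its maximum over [0,1) exactly at the two points 0 and x₀ ∈ (0,1). Let j > 0 be such that α⁻(j) < 1 < α⁺(j). Then the set of pairs (d₁, d₂) ∈ (0, x₀) × (x₀, 1) satisfying ∫₀^{d₁} m⁻_j(x) dx + ∫_{d₁}^{x₀} m⁺_j(x) dx + ∫_{x₀}^{d₂} m⁻_j(x) dx + ∫_{d₂}^{1} m⁺_j(x) dx = 1 is infinite. -/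
open MeasureTheory Set

/-! Write `F = m⁻_j - m⁺_j`, `Φ d = ∫₀^d F`, `Ψ d = ∫_{x₀}^d F` and `A = α⁺(j)`. The mass of the
pair `(d₁, d₂)` is `A + Φ d₁ + Ψ d₂`, where `Φ` and `Ψ` are continuous, `Φ 0 + Ψ x₀ = 0 > 1 - A`,
`Φ x₀ + Ψ 1 = α⁻(j) - A < 1 - A`, and `Ψ 1 < 0` because `m⁻_j < j^{2/3} ≤ m⁺_j` wherever
`V < max V`. The `d₁ ∈ (0, x₀)` with `Φ d₁ ∈ (1 - A, 1 - A - Ψ 1)` then form a nonempty open set, and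
for each of them the intermediate value theorem gives `d₂ ∈ (x₀, 1)` with `Ψ d₂ = 1 - A - Φ d₁`.
Measurability of the branches comes from their monotone dependence on `V`, since
`t ↦ j²/(2t²) + t` is strictly monotone on each branch. -/

theorem div_sq_add_sub_div_sq_add (b : ℝ) {s t : ℝ} (hs : s ≠ 0) (ht : t ≠ 0) :
    (b / (2 * s ^ 2) + s) - (b / (2 * t ^ 2) + t)
      = (t - s) * (b * (s + t) - 2 * s ^ 2 * t ^ 2) / (2 * s ^ 2 * t ^ 2) := by
  field_simp
  ring

theorem strictAntiOn_div_sq_add {b c : ℝ} (hcb : c ^ 3 ≤ b) :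
    StrictAntiOn (fun t : ℝ => b / (2 * t ^ 2) + t) (Ioc 0 c) := by
  intro s ⟨hs, _⟩ t ⟨_, htc⟩ hst
  have ht : 0 < t := hs.trans hst
  have ht3 : t ^ 3 ≤ b := (pow_le_pow_left₀ ht.le htc 3).trans hcb
  have hkey : 2 * s ^ 2 * t ^ 2 < b * (s + t) := by
    nlinarith [mul_pos (mul_pos ht ht) (sub_pos.2 hst), mul_pos hs ht, mul_pos hs hs]
  have hpos : 0 < (t - s) * (b * (s + t) - 2 * s ^ 2 * t ^ 2) / (2 * s ^ 2 * t ^ 2) := by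
    apply div_pos (mul_pos (sub_pos.2 hst) (sub_pos.2 hkey)); positivity
  show b / (2 * t ^ 2) + t < b / (2 * s ^ 2) + s
  linarith [div_sq_add_sub_div_sq_add b hs.ne' ht.ne']

theorem strictMonoOn_div_sq_add {b c : ℝ} (hc : 0 < c) (hcb : b ≤ c ^ 3) :
    StrictMonoOn (fun t : ℝ => b / (2 * t ^ 2) + t) (Ici c) := by
  intro s hcs t _ hst
  have hs : 0 < s := hc.trans_le hcs
  have ht : 0 < t := hs.trans hst
  have hs3 : b ≤ s ^ 3 := hcb.trans (pow_le_pow_left₀ hc.le hcs 3)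
  have hkey : b * (s + t) < 2 * s ^ 2 * t ^ 2 := by
    nlinarith [mul_pos (mul_pos hs hs) (sub_pos.2 hst), mul_pos hs ht, mul_pos hs hs]
  have hneg : (t - s) * (b * (s + t) - 2 * s ^ 2 * t ^ 2) / (2 * s ^ 2 * t ^ 2) < 0 := by
    apply div_neg_of_neg_of_pos (mul_neg_of_pos_of_neg (sub_pos.2 hst) (sub_neg.2 hkey))
    positivity
  show b / (2 * s ^ 2) + s < b / (2 * t ^ 2) + t
  linarith [div_sq_add_sub_div_sq_add b hs.ne' ht.ne']

theorem measurable_of_strictMonoOn_comp {α : Type*} [MeasurableSpace α] {f : ℝ → ℝ}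
    {s : Set ℝ} (hf : StrictMonoOn f s) {u : α → ℝ} (hu : ∀ x, u x ∈ s)
    (hfu : Measurable (f ∘ u)) : Measurable u := by
  refine measurable_of_Iio fun a => ?_
  have hlower : u ⁻¹' Iio a = (f ∘ u) ⁻¹' lowerClosure ((f ∘ u) '' (u ⁻¹' Iio a)) := by
    ext x
    refine ⟨fun hx => subset_lowerClosure (mem_image_of_mem _ hx), ?_⟩
    rintro ⟨_, ⟨y, hy, rfl⟩, hxy⟩
    exact ((hf.le_iff_le (hu x) (hu y)).1 hxy).trans_lt hy
  rw [hlower]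
  exact hfu (lowerClosure _).lower.ordConnected.measurableSet

theorem IsPreconnected.inter_Ioo_nonempty {S : Set ℝ} (hS : IsPreconnected S) {p q lo hi : ℝ}
    (hp : p ∈ S) (hq : q ∈ S) (hlo : lo < p) (hhi : q < hi) (hlohi : lo < hi) :
    (S ∩ Ioo lo hi).Nonempty := by
  rcases lt_or_ge p hi with hp' | hp'
  · exact ⟨p, hp, hlo, hp'⟩
  rcases lt_or_ge lo q with hq' | hq'
  · exact ⟨q, hq, hq', hhi⟩
  refine ⟨(lo + hi) / 2, ?_, by constructor <;> linarith⟩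
  exact (isPreconnected_iff_ordConnected.1 hS).out hq hp ⟨by linarith, by linarith⟩

theorem infinite_setOf_add_eq {Φ Ψ : ℝ → ℝ} (hΦ : Continuous Φ) (hΨ : Continuous Ψ)
    {a b c T : ℝ} (hab : a < b) (hbc : b < c) (hΨbc : Ψ c < Ψ b)
    (hlt : Φ b + Ψ c < T) (hgt : T < Φ a + Ψ b) :
    {d : ℝ × ℝ | d.1 ∈ Ioo a b ∧ d.2 ∈ Ioo b c ∧ Φ d.1 + Ψ d.2 = T}.Infinite := by
  set U := Φ ⁻¹' Ioo (T - Ψ b) (T - Ψ c)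
  have hU : IsOpen U := isOpen_Ioo.preimage hΦ
  have hUIcc : (closure (Ioo a b) ∩ U).Nonempty := by
    rw [closure_Ioo hab.ne]
    obtain ⟨_, ⟨d, hd, rfl⟩, hdU⟩ :=
      (isPreconnected_Icc.image Φ hΦ.continuousOn).inter_Ioo_nonempty
        (lo := T - Ψ b) (hi := T - Ψ c) (mem_image_of_mem Φ (left_mem_Icc.2 hab.le))
        (mem_image_of_mem Φ (right_mem_Icc.2 hab.le)) (by linarith) (by linarith) (by linarith)
    exact ⟨d, hd, hdU⟩
  obtain ⟨d, hd⟩ := (closure_inter_open_nonempty_iff hU).1 hUIcc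
  have hsub : Ioo a b ∩ U ⊆ Prod.fst ''
      {d : ℝ × ℝ | d.1 ∈ Ioo a b ∧ d.2 ∈ Ioo b c ∧ Φ d.1 + Ψ d.2 = T} := by
    rintro d₁ ⟨hd₁, hΦd₁⟩
    obtain ⟨d₂, hd₂, hΨd₂⟩ := intermediate_value_Ioo' hbc.le hΨ.continuousOn
      (⟨by linarith [hΦd₁.2], by linarith [hΦd₁.1]⟩ : T - Φ d₁ ∈ Ioo (Ψ c) (Ψ b))
    exact ⟨(d₁, d₂), ⟨hd₁, hd₂, by simp [hΨd₂]⟩, rfl⟩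
  exact ((infinite_of_mem_nhds d ((isOpen_Ioo.inter hU).mem_nhds hd)).mono hsub).of_image _

theorem integral_two_jump_eq {f g : ℝ → ℝ} (hf : ∀ a b, IntervalIntegrable f volume a b)
    (hg : ∀ a b, IntervalIntegrable g volume a b) (a d₁ b d₂ c : ℝ) :
    (∫ x in a..d₁, f x) + (∫ x in d₁..b, g x) + (∫ x in b..d₂, f x) + (∫ x in d₂..c, g x)
      = (∫ x in a..c, g x) + (∫ x in a..d₁, f x - g x) + ∫ x in b..d₂, f x - g x := by
  rw [intervalIntegral.integral_sub (hf a d₁) (hg a d₁),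
    intervalIntegral.integral_sub (hf b d₂) (hg b d₂),
    ← intervalIntegral.integral_add_adjacent_intervals (hg a d₁) (hg d₁ c),
    ← intervalIntegral.integral_add_adjacent_intervals (hg d₁ b) (hg b c),
    ← intervalIntegral.integral_add_adjacent_intervals (hg b d₂) (hg d₂ c)]
  ring

theorem rpow_two_div_three_pow_three {j : ℝ} (hj : 0 ≤ j) : (j ^ ((2 : ℝ) / 3)) ^ 3 = j ^ 2 := by
  rw [← Real.rpow_natCast, ← Real.rpow_mul hj]
  norm_num

theorem div_sq_add_of_pow_three_eq {b c : ℝ} (hc : c ≠ 0) (hcb : c ^ 3 = b) :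
    b / (2 * c ^ 2) + c = 3 / 2 * c := by
  subst hcb
  field_simp
  ring

theorem lt_of_div_sq_add_ne {b c m m' : ℝ} (hc : c ≠ 0) (hcb : c ^ 3 = b) (hm : m ≤ c)
    (hm' : c ≤ m') (hne : b / (2 * m ^ 2) + m ≠ 3 / 2 * c) : m < m' :=
  (hm.lt_of_ne fun h => hne (by rw [h]; exact div_sq_add_of_pow_three_eq hc hcb)).trans_le hm'

section Branches

variable {b c : ℝ} {u w : ℝ → ℝ}

theorem intervalIntegrable_of_lower_branch (hcb : c ^ 3 ≤ b) (hu : ∀ x, u x ∈ Ioc 0 c)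
    (hw : Measurable w) (huw : ∀ x, b / (2 * u x ^ 2) + u x = w x) (a a' : ℝ) :
    IntervalIntegrable u volume a a' := by
  have hmeas : Measurable u :=
    measurable_of_strictMonoOn_comp (strictAntiOn_div_sq_add hcb).neg hu
      (by simpa only [Function.comp_def, huw] using hw.fun_neg)
  refine intervalIntegrable_const (c := c).mono_fun hmeas.aestronglyMeasurable
    (ae_of_all _ fun x => ?_)
  simp only [Real.norm_eq_abs, abs_of_pos (hu x).1]
  exact (hu x).2.trans (le_abs_self c)

theorem intervalIntegrable_of_upper_branch (hb : 0 ≤ b) (hc : 0 < c) (hcb : b ≤ c ^ 3)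
    (hu : ∀ x, c ≤ u x) (hw : Measurable w) (hwi : ∀ a a', IntervalIntegrable w volume a a')
    (huw : ∀ x, b / (2 * u x ^ 2) + u x = w x) (a a' : ℝ) :
    IntervalIntegrable u volume a a' := by
  have hmeas : Measurable u :=
    measurable_of_strictMonoOn_comp (strictMonoOn_div_sq_add hc hcb) hu
      (by simpa only [Function.comp_def, huw] using hw)
  refine (hwi a a').mono_fun hmeas.aestronglyMeasurable (ae_of_all _ fun x => ?_)
  have hkin : 0 ≤ b / (2 * u x ^ 2) := by positivity
  simp only [Real.norm_eq_abs, abs_of_nonneg (hc.le.trans (hu x))]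
  exact (le_add_of_nonneg_left hkin).trans ((huw x).le.trans (le_abs_self _))

end Branches

theorem stmt_8_general
    (V : ℝ → ℝ) (hVc : Continuous V)
    (M : ℝ)
    (x₀ : ℝ) (hx₀ : x₀ ∈ Set.Ioo (0:ℝ) 1)
    (hVuniq : ∀ x ∈ Set.Ico (0:ℝ) 1, V x = M → x = 0 ∨ x = x₀)
    (j : ℝ) (hj : 0 < j)
    (mm mp : ℝ → ℝ)
    (hmm : ∀ x, 0 < mm x ∧ mm x ≤ j ^ ((2:ℝ)/3) ∧
      j ^ 2 / (2 * (mm x) ^ 2) + mm x = (M + 3 / 2 * j ^ ((2:ℝ)/3)) - V x)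
    (hmp : ∀ x, j ^ ((2:ℝ)/3) ≤ mp x ∧
      j ^ 2 / (2 * (mp x) ^ 2) + mp x = (M + 3 / 2 * j ^ ((2:ℝ)/3)) - V x)
    (hαm : (∫ x in (0:ℝ)..1, mm x) < 1)
    (hαp : 1 < (∫ x in (0:ℝ)..1, mp x)) :
    {d : ℝ × ℝ | d.1 ∈ Set.Ioo 0 x₀ ∧ d.2 ∈ Set.Ioo x₀ 1 ∧
      (∫ x in (0:ℝ)..d.1, mm x) + (∫ x in d.1..x₀, mp x) +
      (∫ x in x₀..d.2, mm x) + (∫ x in d.2..1, mp x) = 1}.Infinite := by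
  set c := j ^ ((2:ℝ)/3)
  have hc : 0 < c := Real.rpow_pos_of_pos hj _
  have hc3 : c ^ 3 = j ^ 2 := rpow_two_div_three_pow_three hj.le
  have hW : Continuous fun x => M + 3 / 2 * c - V x := continuous_const.sub hVc
  have hmmI := intervalIntegrable_of_lower_branch hc3.le (fun x => ⟨(hmm x).1, (hmm x).2.1⟩)
    hW.measurable fun x => (hmm x).2.2
  have hmpI := intervalIntegrable_of_upper_branch (sq_nonneg j) hc hc3.ge (fun x => (hmp x).1)
    hW.measurable (fun _ _ => hW.intervalIntegrable _ _) fun x => (hmp x).2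
  have hFI : ∀ a b, IntervalIntegrable (fun x => mm x - mp x) volume a b :=
    fun a b => (hmmI a b).sub (hmpI a b)
  have hF_neg : ∀ x ∈ Ioo x₀ 1, mm x - mp x < 0 := by
    intro x hx
    have hVx : V x ≠ M := fun h => by
      rcases hVuniq x ⟨hx₀.1.le.trans hx.1.le, hx.2⟩ h with h0 | h0 <;> linarith [hx.1, hx₀.1]
    refine sub_neg.2 (lt_of_div_sq_add_ne hc.ne' hc3 (hmm x).2.1 (hmp x).1 ?_)
    rw [(hmm x).2.2]
    exact fun h => hVx (by linarith)
  have hΨ1 : ∫ x in x₀..1, mm x - mp x < 0 := by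
    have := intervalIntegral.intervalIntegral_pos_of_pos_on (f := fun x => -(mm x - mp x))
      (hFI x₀ 1).neg (fun x hx => neg_pos.2 (hF_neg x hx)) hx₀.2
    rwa [intervalIntegral.integral_neg, neg_pos] at this
  have hα : (∫ x in (0:ℝ)..x₀, mm x - mp x) + (∫ x in x₀..1, mm x - mp x)
      = (∫ x in (0:ℝ)..1, mm x) - ∫ x in (0:ℝ)..1, mp x := by
    rw [intervalIntegral.integral_add_adjacent_intervals (hFI _ _) (hFI _ _),
      intervalIntegral.integral_sub (hmmI _ _) (hmpI _ _)]
  refine (infinite_setOf_add_eq (T := 1 - ∫ x in (0:ℝ)..1, mp x)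
    (intervalIntegral.continuous_primitive hFI 0) (intervalIntegral.continuous_primitive hFI x₀)
    hx₀.1 hx₀.2 (by simpa using hΨ1) (by linarith) (by simp; linarith)).mono ?_
  rintro d ⟨hd₁, hd₂, hmass⟩
  exact ⟨hd₁, hd₂, by rw [integral_two_jump_eq hmmI hmpI]; linarith⟩

/-- if `V` attains its maximum on `[0,1)` exactly at `0` and at
`x₀ ∈ (0,1)`, and `α⁻(j) < 1 < α⁺(j)`, then there are infinitely many pairs
`(d₁, d₂) ∈ (0,x₀) × (x₀,1)` for which the corresponding two-jump density built
from the branches `m⁻_j, m⁺_j` has total mass one. -/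
theorem stmt_8
    (V : ℝ → ℝ) (hVc : Continuous V) (hVp : Function.Periodic V 1)
    (M : ℝ) (hM : IsGreatest (Set.range V) M)
    (x₀ : ℝ) (hx₀ : x₀ ∈ Set.Ioo (0:ℝ) 1)
    (hV0 : V 0 = M) (hVx₀ : V x₀ = M)
    (hVuniq : ∀ x ∈ Set.Ico (0:ℝ) 1, V x = M → x = 0 ∨ x = x₀)
    (j : ℝ) (hj : 0 < j)
    (mm mp : ℝ → ℝ)
    (hmm : ∀ x, 0 < mm x ∧ mm x ≤ j ^ ((2:ℝ)/3) ∧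
      j ^ 2 / (2 * (mm x) ^ 2) + mm x = (M + 3 / 2 * j ^ ((2:ℝ)/3)) - V x)
    (hmp : ∀ x, j ^ ((2:ℝ)/3) ≤ mp x ∧
      j ^ 2 / (2 * (mp x) ^ 2) + mp x = (M + 3 / 2 * j ^ ((2:ℝ)/3)) - V x)
    (hαm : (∫ x in (0:ℝ)..1, mm x) < 1)
    (hαp : 1 < (∫ x in (0:ℝ)..1, mp x)) :
    {d : ℝ × ℝ | d.1 ∈ Set.Ioo 0 x₀ ∧ d.2 ∈ Set.Ioo x₀ 1 ∧
      (∫ x in (0:ℝ)..d.1, mm x) + (∫ x in d.1..x₀, mp x) +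
      (∫ x in x₀..d.2, mm x) + (∫ x in d.2..1, mp x) = 1}.Infinite :=
  stmt_8_general V hVc M x₀ hx₀ hVuniq j hj mm mp hmm hmp hαm hαp
end

section
/- Suppose ∫₀¹ (max V − V(x)) dx > 1. Then the set of pairs (d₁, d₂) with 0 ≤ d₁ < d₂ ≤ 1 and ∫_{d₁}^{d₂} (max V − V(x)) dx = 1 is infinite. -/
open MeasureTheory

/-- if `∫₀¹ (max V − V) > 1`, then there are infinitely many pairs
`0 ≤ d₁ < d₂ ≤ 1` with `∫_{d₁}^{d₂} (max V − V) = 1`. -/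
theorem stmt_9
    (V : ℝ → ℝ) (hVc : Continuous V) (hVp : Function.Periodic V 1)
    (M : ℝ) (hM : IsGreatest (Set.range V) M)
    (hosc : 1 < (∫ x in (0:ℝ)..1, (M - V x))) :
    {d : ℝ × ℝ | 0 ≤ d.1 ∧ d.1 < d.2 ∧ d.2 ≤ 1 ∧
      (∫ x in d.1..d.2, (M - V x)) = 1}.Infinite := by
  set S := {d : ℝ × ℝ | 0 ≤ d.1 ∧ d.1 < d.2 ∧ d.2 ≤ 1 ∧
      (∫ x in d.1..d.2, (M - V x)) = 1} with hS
  have hgc : Continuous fun x => M - V x := continuous_const.sub hVc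
  have hint : ∀ a b : ℝ, IntervalIntegrable (fun x => M - V x) volume a b :=
    fun a b => hgc.intervalIntegrable a b
  set F : ℝ → ℝ := fun t => ∫ x in (0:ℝ)..t, (M - V x) with hF
  have hFc : Continuous F := intervalIntegral.continuous_primitive hint 0
  have hF0 : F 0 = 0 := intervalIntegral.integral_same
  have hc : 0 < F 1 - 1 := by simp only [hF]; linarith
  obtain ⟨δ, hδ, hδ'⟩ := Metric.continuousAt_iff.mp (hFc.continuousAt (x := 0)) (F 1 - 1) hc
  set ε := min (δ/2) 1 with hε
  have hε0 : 0 < ε := lt_min (by linarith) one_pos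
  have hsub : Set.Icc (0:ℝ) ε ⊆ Prod.fst '' S := by
    rintro d₁ ⟨h0, h1⟩
    have hd1le1 : d₁ ≤ 1 := h1.trans (min_le_right _ _)
    have hdist : dist d₁ (0:ℝ) < δ := by
      rw [Real.dist_eq, sub_zero, abs_of_nonneg h0]
      have : d₁ ≤ δ/2 := h1.trans (min_le_left _ _)
      linarith
    have hFd1 : |F d₁ - F 0| < F 1 - 1 := by
      have := hδ' hdist
      rwa [Real.dist_eq] at this
    rw [hF0, sub_zero] at hFd1
    have habs := abs_lt.mp hFd1
    have hmem : F d₁ + 1 ∈ Set.Icc (F d₁) (F 1) := ⟨by linarith, by linarith [habs.2]⟩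
    obtain ⟨t, ht, hFt⟩ := intermediate_value_Icc hd1le1 hFc.continuousOn hmem
    have hlt : d₁ < t := by
      rcases eq_or_lt_of_le ht.1 with h | h
      · exfalso; rw [← h] at hFt; linarith
      · exact h
    have hval : (∫ x in d₁..t, (M - V x)) = 1 := by
      have : (∫ x in (0:ℝ)..t, (M - V x)) - (∫ x in (0:ℝ)..d₁, (M - V x))
          = ∫ x in d₁..t, (M - V x) :=
        intervalIntegral.integral_interval_sub_left (hint 0 t) (hint 0 d₁)
      have hFt' : F t - F d₁ = 1 := by rw [hFt]; ring
      rw [← this]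
      exact hFt'
    exact ⟨(d₁, t), ⟨h0, hlt, ht.2, hval⟩, rfl⟩
  have hinf : (Prod.fst '' S).Infinite := (Set.Icc_infinite hε0).mono hsub
  exact Set.Infinite.of_image _ hinf
end

section
/- For every x ∈ ℝ, the maps j ↦ m⁻_j(x) and j ↦ m⁺_j(x) are strictly increasing on (0, ∞). Consequently, α⁻ and α⁺ are strictly increasing functions on (0, ∞). -/
/-!
With `a = j^{2/3}` one has `j² = a³`, and the equation for `m^±_j(x)` becomes
`energyExcess a t = max V − V x`, whose right-hand side no longer depends on `j`. As
`energyExcess a t = (a − t)²(a + 2t)/(2t²)` increases in `a` for `a ≥ t` and decreases for `a ≤ t`,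
raising `j` moves both roots up: the lower one lies where the function decreases in `t`, the upper
one where it increases. Each root is a monotone function of `V x`, hence measurable, and is bounded
by the continuous `H_j^{cr} − V`, so strict pointwise monotonicity integrates to `α^±`.
-/

open MeasureTheory Set

noncomputable def energyExcess (a t : ℝ) : ℝ := a ^ 3 / (2 * t ^ 2) + t - 3 / 2 * a

theorem energyExcess_sub_energyExcess_right (a : ℝ) {s t : ℝ} (hs : s ≠ 0) (ht : t ≠ 0) :
    energyExcess a t - energyExcess a s =
      (t - s) * (2 * s ^ 2 * t ^ 2 - a ^ 3 * (s + t)) / (2 * s ^ 2 * t ^ 2) := by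
  unfold energyExcess; field_simp; ring

theorem energyExcess_sub_energyExcess_left {a b t : ℝ} (ht : t ≠ 0) :
    energyExcess b t - energyExcess a t =
      (b - a) * (a ^ 2 + a * b + b ^ 2 - 3 * t ^ 2) / (2 * t ^ 2) := by
  unfold energyExcess; field_simp; ring

theorem strictAntiOn_energyExcess (a : ℝ) : StrictAntiOn (energyExcess a) (Ioc 0 a) := by
  rintro s ⟨hs, hsa⟩ t ⟨ht, hta⟩ hst
  have hst2₁ : s ^ 2 * t ^ 2 < t ^ 3 * s := by
    have := mul_lt_mul_of_pos_left hst (by positivity : 0 < s * t ^ 2); nlinarith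
  have hst2₂ : s ^ 2 * t ^ 2 < t ^ 3 * t := by
    have := mul_lt_mul_of_pos_left hst (by positivity : 0 < (s + t) * t ^ 2); nlinarith
  have hcube : t ^ 3 * (s + t) ≤ a ^ 3 * (s + t) :=
    mul_le_mul_of_nonneg_right (pow_le_pow_left₀ ht.le hta 3) (by positivity)
  rw [← sub_neg, energyExcess_sub_energyExcess_right a hs.ne' ht.ne']
  exact div_neg_of_neg_of_pos (mul_neg_of_pos_of_neg (by linarith) (by nlinarith)) (by positivity)

theorem strictMonoOn_energyExcess {a : ℝ} (ha : 0 < a) : StrictMonoOn (energyExcess a) (Ici a) := by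
  rintro s hs t ht hst
  rw [mem_Ici] at hs ht
  have hs0 := ha.trans_le hs
  have ht0 := hs0.trans hst
  have h₁ : a ^ 3 * t < s ^ 2 * t ^ 2 := by
    have : a ^ 2 * a < s ^ 2 * t :=
      mul_lt_mul_of_le_of_lt_of_pos_of_nonneg (pow_le_pow_left₀ ha.le hs 2) (hs.trans_lt hst)
        (by positivity) ht0.le
    nlinarith
  have h₂ : a ^ 3 * s < s ^ 2 * t ^ 2 := by
    have : a * a ^ 2 < s * t ^ 2 :=
      mul_lt_mul_of_le_of_lt_of_pos_of_nonneg hs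
        (pow_lt_pow_left₀ (hs.trans_lt hst) ha.le two_ne_zero) ha (by positivity)
    nlinarith
  have key : 0 < 2 * s ^ 2 * t ^ 2 - a ^ 3 * (s + t) := by nlinarith
  rw [← sub_pos, energyExcess_sub_energyExcess_right a hs0.ne' ht0.ne']
  exact div_pos (mul_pos (by linarith) key) (by positivity)

theorem strictMonoOn_energyExcess_left {t : ℝ} (ht : 0 < t) :
    StrictMonoOn (energyExcess · t) (Ici t) := by
  rintro a ha b hb hab
  rw [mem_Ici] at ha hb
  rw [← sub_pos, energyExcess_sub_energyExcess_left ht.ne']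
  exact div_pos (mul_pos (by linarith) (by nlinarith)) (by positivity)

theorem strictAntiOn_energyExcess_left (t : ℝ) :
    StrictAntiOn (energyExcess · t) (Icc 0 t) := by
  rintro a ⟨ha, hat⟩ b ⟨hb, hbt⟩ hab
  have ht : 0 < t := by linarith
  rw [← sub_pos, ← neg_sub, neg_pos, energyExcess_sub_energyExcess_left ht.ne']
  exact div_neg_of_neg_of_pos (mul_neg_of_pos_of_neg (by linarith) (by nlinarith)) (by positivity)

theorem lt_of_energyExcess_eq_of_le {a b s t : ℝ} (hs : 0 < s) (ht : 0 < t) (hsa : s ≤ a)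
    (htb : t ≤ b) (hab : a < b) (h : energyExcess a s = energyExcess b t) : s < t := by
  by_contra! hts
  have h₁ : energyExcess a s < energyExcess b s :=
    strictMonoOn_energyExcess_left hs hsa (hsa.trans hab.le) hab
  have h₂ : energyExcess b s ≤ energyExcess b t :=
    (strictAntiOn_energyExcess b).antitoneOn ⟨ht, htb⟩ ⟨hs, hsa.trans hab.le⟩ hts
  linarith

theorem lt_of_energyExcess_eq_of_ge {a b s t : ℝ} (ha : 0 < a) (has : a ≤ s)
    (hbt : b ≤ t) (hab : a < b) (h : energyExcess a s = energyExcess b t) : s < t := by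
  by_contra! hts
  have h₁ : energyExcess b t < energyExcess a t :=
    strictAntiOn_energyExcess_left t ⟨ha.le, hab.le.trans hbt⟩ ⟨ha.le.trans hab.le, hbt⟩ hab
  have h₂ : energyExcess a t ≤ energyExcess a s :=
    (strictMonoOn_energyExcess ha).monotoneOn (hab.le.trans hbt) has hts
  linarith

theorem energyExcess_rpow_eq {j t M v : ℝ} (hj : 0 < j)
    (h : j ^ 2 / (2 * t ^ 2) + t = (M + 3 / 2 * j ^ ((2:ℝ)/3)) - v) :
    energyExcess (j ^ ((2:ℝ)/3)) t = M - v := by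
  have hcube : (j ^ ((2:ℝ)/3)) ^ 3 = j ^ 2 := by
    rw [← Real.rpow_natCast, ← Real.rpow_mul hj.le]; norm_num
  rw [energyExcess, hcube]; linarith

theorem Measurable.of_le_imp_le {α : Type*} [MeasurableSpace α] {V f : α → ℝ}
    (hV : Measurable V) (h : ∀ x y, V x ≤ V y → f x ≤ f y) : Measurable f := by
  refine measurable_of_Iic fun c => ?_
  have : f ⁻¹' Iic c = V ⁻¹' lowerClosure (V '' (f ⁻¹' Iic c)) := by
    ext x
    refine ⟨fun hx => subset_lowerClosure ⟨x, hx, rfl⟩, ?_⟩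
    rintro ⟨_, ⟨y, hy, rfl⟩, hxy⟩
    exact (h x y hxy).trans hy
  rw [this]
  exact hV (lowerClosure _).lower.ordConnected.measurableSet

theorem IntervalIntegrable.of_nonneg_of_le_continuous {f g : ℝ → ℝ} {a b : ℝ}
    (hf : Measurable f) (hg : Continuous g) (h0 : ∀ x, 0 ≤ f x) (hfg : ∀ x, f x ≤ g x) :
    IntervalIntegrable f volume a b :=
  (hg.intervalIntegrable a b).mono_fun' hf.aestronglyMeasurable
    (Filter.Eventually.of_forall fun x => by simpa [abs_of_nonneg (h0 x)] using hfg x)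

theorem StrictMonoOn.intervalIntegral {ι : Type*} [Preorder ι] {f : ι → ℝ → ℝ} {s : Set ι}
    {a b : ℝ} (hab : a < b) (hf : ∀ i ∈ s, IntervalIntegrable (f i) volume a b)
    (hmono : ∀ x, StrictMonoOn (f · x) s) : StrictMonoOn (fun i => ∫ x in a..b, f i x) s := by
  intro i hi k hk hik
  have := intervalIntegral.intervalIntegral_pos_of_pos ((hf k hk).sub (hf i hi))
    (fun x => sub_pos.mpr (hmono x hi hk hik)) hab
  rwa [intervalIntegral.integral_sub (hf k hk) (hf i hi), sub_pos] at this

section Roots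

variable {M : ℝ}

theorem strictMonoOn_of_lowerRoot {v : ℝ} {m : ℝ → ℝ}
    (hm : ∀ j, 0 < j → 0 < m j ∧ m j ≤ j ^ ((2:ℝ)/3) ∧
      j ^ 2 / (2 * (m j) ^ 2) + m j = (M + 3 / 2 * j ^ ((2:ℝ)/3)) - v) :
    StrictMonoOn m (Ioi 0) := by
  intro i hi k hk hik
  obtain ⟨hi₀, hia, hi_eq⟩ := hm i hi
  obtain ⟨hk₀, hka, hk_eq⟩ := hm k hk
  refine lt_of_energyExcess_eq_of_le hi₀ hk₀ hia hka
    (Real.rpow_lt_rpow (le_of_lt hi) hik (by norm_num)) ?_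
  rw [energyExcess_rpow_eq hi hi_eq, energyExcess_rpow_eq hk hk_eq]

theorem strictMonoOn_of_upperRoot {v : ℝ} {m : ℝ → ℝ}
    (hm : ∀ j, 0 < j → j ^ ((2:ℝ)/3) ≤ m j ∧
      j ^ 2 / (2 * (m j) ^ 2) + m j = (M + 3 / 2 * j ^ ((2:ℝ)/3)) - v) :
    StrictMonoOn m (Ioi 0) := by
  intro i hi k hk hik
  obtain ⟨hia, hi_eq⟩ := hm i hi
  obtain ⟨hka, hk_eq⟩ := hm k hk
  refine lt_of_energyExcess_eq_of_ge (Real.rpow_pos_of_pos hi _) hia hka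
    (Real.rpow_lt_rpow (le_of_lt hi) hik (by norm_num)) ?_
  rw [energyExcess_rpow_eq hi hi_eq, energyExcess_rpow_eq hk hk_eq]

variable {j : ℝ} {V m : ℝ → ℝ}

theorem intervalIntegrable_of_lowerRoot (hV : Continuous V) (hj : 0 < j)
    (hm : ∀ x, 0 < m x ∧ m x ≤ j ^ ((2:ℝ)/3) ∧
      j ^ 2 / (2 * (m x) ^ 2) + m x = (M + 3 / 2 * j ^ ((2:ℝ)/3)) - V x) (a b : ℝ) :
    IntervalIntegrable m volume a b := by
  have hmeas : Measurable m := hV.measurable.of_le_imp_le fun x y hxy => by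
    obtain ⟨hx₀, hxa, hx_eq⟩ := hm x
    obtain ⟨hy₀, hya, hy_eq⟩ := hm y
    rw [← (strictAntiOn_energyExcess _).le_iff_ge ⟨hy₀, hya⟩ ⟨hx₀, hxa⟩,
      energyExcess_rpow_eq hj hx_eq, energyExcess_rpow_eq hj hy_eq]
    linarith
  refine .of_nonneg_of_le_continuous (g := fun x => M + 3 / 2 * j ^ ((2:ℝ)/3) - V x) hmeas
    (by fun_prop) (fun x => (hm x).1.le) fun x => ?_
  have : 0 ≤ j ^ 2 / (2 * (m x) ^ 2) := by positivity
  linarith [(hm x).2.2]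

theorem intervalIntegrable_of_upperRoot (hV : Continuous V) (hj : 0 < j)
    (hm : ∀ x, j ^ ((2:ℝ)/3) ≤ m x ∧
      j ^ 2 / (2 * (m x) ^ 2) + m x = (M + 3 / 2 * j ^ ((2:ℝ)/3)) - V x) (a b : ℝ) :
    IntervalIntegrable m volume a b := by
  have ha : 0 < j ^ ((2:ℝ)/3) := Real.rpow_pos_of_pos hj _
  have hmeas : Measurable m := hV.measurable.neg.of_le_imp_le fun x y hxy => by
    obtain ⟨hxa, hx_eq⟩ := hm x
    obtain ⟨hya, hy_eq⟩ := hm y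
    rw [← (strictMonoOn_energyExcess ha).le_iff_le hxa hya,
      energyExcess_rpow_eq hj hx_eq, energyExcess_rpow_eq hj hy_eq]
    simp only [Pi.neg_apply, neg_le_neg_iff] at hxy
    linarith
  refine .of_nonneg_of_le_continuous (g := fun x => M + 3 / 2 * j ^ ((2:ℝ)/3) - V x) hmeas
    (by fun_prop) (fun x => (ha.trans_le (hm x).1).le)
    fun x => ?_
  have : 0 ≤ j ^ 2 / (2 * (m x) ^ 2) := by positivity
  linarith [(hm x).2]

end Roots

theorem stmt_10_general
    (V : ℝ → ℝ) (hVc : Continuous V)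
    (M : ℝ)
    (mm mp : ℝ → ℝ → ℝ)
    (hmm : ∀ j x, 0 < j →
      0 < mm j x ∧ mm j x ≤ j ^ ((2:ℝ)/3) ∧
      j ^ 2 / (2 * (mm j x) ^ 2) + mm j x = (M + 3 / 2 * j ^ ((2:ℝ)/3)) - V x)
    (hmp : ∀ j x, 0 < j →
      j ^ ((2:ℝ)/3) ≤ mp j x ∧
      j ^ 2 / (2 * (mp j x) ^ 2) + mp j x = (M + 3 / 2 * j ^ ((2:ℝ)/3)) - V x) :
    (∀ x, StrictMonoOn (fun j => mm j x) (Set.Ioi 0) ∧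
      StrictMonoOn (fun j => mp j x) (Set.Ioi 0)) ∧
    StrictMonoOn (fun j => ∫ x in (0:ℝ)..1, mm j x) (Set.Ioi 0) ∧
    StrictMonoOn (fun j => ∫ x in (0:ℝ)..1, mp j x) (Set.Ioi 0) := by
  refine ⟨fun x => ⟨strictMonoOn_of_lowerRoot (hmm · x), strictMonoOn_of_upperRoot (hmp · x)⟩,
    ?_, ?_⟩
  · exact StrictMonoOn.intervalIntegral zero_lt_one
      (fun j hj => intervalIntegrable_of_lowerRoot hVc hj (hmm j · hj) 0 1)
      fun x => strictMonoOn_of_lowerRoot (hmm · x)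
  · exact StrictMonoOn.intervalIntegral zero_lt_one
      (fun j hj => intervalIntegrable_of_upperRoot hVc hj (hmp j · hj) 0 1)
      fun x => strictMonoOn_of_upperRoot (hmp · x)

/-- the branches `j ↦ m⁻_j(x)` and `j ↦ m⁺_j(x)` (solutions of
`j²/(2t²) + t = H_j^{cr} − V(x)` with `H_j^{cr} = max V + (3/2) j^{2/3}`)
are strictly increasing in `j` on `(0,∞)` for each `x`; consequently
`α⁻` and `α⁺` are strictly increasing on `(0,∞)`. -/
theorem stmt_10
    (V : ℝ → ℝ) (hVc : Continuous V) (hVp : Function.Periodic V 1)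
    (M : ℝ) (hM : IsGreatest (Set.range V) M)
    (mm mp : ℝ → ℝ → ℝ)
    (hmm : ∀ j x, 0 < j →
      0 < mm j x ∧ mm j x ≤ j ^ ((2:ℝ)/3) ∧
      j ^ 2 / (2 * (mm j x) ^ 2) + mm j x = (M + 3 / 2 * j ^ ((2:ℝ)/3)) - V x)
    (hmp : ∀ j x, 0 < j →
      j ^ ((2:ℝ)/3) ≤ mp j x ∧
      j ^ 2 / (2 * (mp j x) ^ 2) + mp j x = (M + 3 / 2 * j ^ ((2:ℝ)/3)) - V x) :
    (∀ x, StrictMonoOn (fun j => mm j x) (Set.Ioi 0) ∧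
      StrictMonoOn (fun j => mp j x) (Set.Ioi 0)) ∧
    StrictMonoOn (fun j => ∫ x in (0:ℝ)..1, mm j x) (Set.Ioi 0) ∧
    StrictMonoOn (fun j => ∫ x in (0:ℝ)..1, mp j x) (Set.Ioi 0) :=
  stmt_10_general V hVc M mm mp hmm hmp
end

section
/- Suppose that V attains its maximum over [0,1) at exactly one point, and that max V > 1 + ∫₀¹ V(x) dx. Then there exists a constant c > 0, depending only on V, with the following property: for all p, H̄ ∈ ℝ and all C¹, 1-periodic functions u, m : ℝ → ℝ with m > 0, ∫₀¹ m(x) dx = 1, (u'(x)+p)²/2 + V(x) + m(x) = H̄ for all x, and x ↦ m(x)·(u'(x)+p) constant, the constant value j = m(u'+p) satisfies |j| ≥ c. -/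
open MeasureTheory

/-- a priori lower bound on the current of any smooth solution of
the stationary MFG with coupling `g(m) = −m` when `V` has a single maximum point
on `[0,1)` and large oscillation `max V > 1 + ∫₀¹ V`. -/
theorem stmt_14
    (V : ℝ → ℝ) (hVc : Continuous V) (hVp : Function.Periodic V 1)
    (M : ℝ) (hM : IsGreatest (Set.range V) M)
    (x₀ : ℝ) (hx₀ : x₀ ∈ Set.Ico (0:ℝ) 1) (hVx₀ : V x₀ = M)
    (hVuniq : ∀ x ∈ Set.Ico (0:ℝ) 1, V x = M → x = x₀)
    (hosc : 1 + (∫ x in (0:ℝ)..1, V x) < M) :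
    ∃ c > 0, ∀ (p H j : ℝ) (u m : ℝ → ℝ),
      ContDiff ℝ 1 u → Function.Periodic u 1 →
      ContDiff ℝ 1 m → Function.Periodic m 1 →
      (∀ x, 0 < m x) → (∫ x in (0:ℝ)..1, m x) = 1 →
      (∀ x, (deriv u x + p) ^ 2 / 2 + V x + m x = H) →
      (∀ x, m x * (deriv u x + p) = j) →
      c ≤ |j| := by
  set I : ℝ := ∫ x in (0:ℝ)..1, V x with hIdef
  have hδ : 0 < M - 1 - I := by linarith
  refine ⟨min 1 (Real.sqrt ((2*(M-1-I))^3)), lt_min one_pos (Real.sqrt_pos.2 (by positivity)), ?_⟩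
  intro p H j u m hu hup hm hmp hm0 hmint hHJ hj
  set k : ℝ := (j^2) ^ ((1:ℝ)/3) with hkdef
  have hk0 : 0 ≤ k := Real.rpow_nonneg (by positivity) _
  have hk3 : k ^ (3:ℕ) = j ^ 2 := by
    rw [hkdef, ← Real.rpow_natCast ((j^2) ^ ((1:ℝ)/3)) 3, ← Real.rpow_mul (by positivity)]
    norm_num
  -- AM-GM at x₀ : M + 3/2 k ≤ H
  have hAM : M + 3/2 * k ≤ H := by
    have h1 := hHJ x₀
    have h2 := hj x₀
    have h3 := hm0 x₀
    rw [hVx₀] at h1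
    have h2' : m x₀ ^ 2 * (deriv u x₀ + p) ^ 2 = k ^ 3 := by rw [hk3, ← h2]; ring
    nlinarith [mul_nonneg (sq_nonneg (k - m x₀)) (by linarith : (0:ℝ) ≤ k + 2 * m x₀),
      mul_pos h3 h3, sq_nonneg (deriv u x₀ + p)]
  by_cases hA : ∀ x, k ≤ m x
  · -- large branch: H - k/2 - V x ≤ m x pointwise
    have hpt : ∀ x, H - k/2 - V x ≤ m x := by
      intro x
      have h1 := hHJ x
      have h2 := hj x
      have h3 := hm0 x
      have h4 := hA x
      have h2' : m x ^ 2 * (deriv u x + p) ^ 2 = k ^ 3 := by rw [hk3, ← h2]; ring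
      nlinarith [mul_pos h3 h3,
        mul_nonneg (mul_nonneg hk0 (sub_nonneg.mpr h4)) (by linarith : (0:ℝ) ≤ m x + k)]
    have hint2 : (∫ x in (0:ℝ)..1, (H - k/2 - V x)) ≤ ∫ x in (0:ℝ)..1, m x := by
      apply intervalIntegral.integral_mono_on (by norm_num)
      · exact (Continuous.sub continuous_const hVc).intervalIntegrable _ _
      · exact hm.continuous.intervalIntegrable _ _
      · exact fun x _ => hpt x
    have hval : (∫ x in (0:ℝ)..1, (H - k/2 - V x)) = (H - k/2) - I := by
      rw [intervalIntegral.integral_sub (intervalIntegrable_const) (hVc.intervalIntegrable _ _)]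
      simp [hIdef]
    rw [hval, hmint] at hint2
    -- so k ≥ 2(M-1-I)
    have hk2 : 2*(M-1-I) ≤ k := by linarith
    have hcube : (2*(M-1-I))^3 ≤ j^2 := by
      rw [← hk3]; exact pow_le_pow_left₀ (by positivity) hk2 3
    have := Real.sqrt_le_sqrt hcube
    rw [Real.sqrt_sq_eq_abs] at this
    exact le_trans (min_le_right _ _) this
  · by_cases hB : ∀ x, m x ≤ k
    · -- small branch: 1 = ∫ m ≤ k
      have hint2 : (∫ x in (0:ℝ)..1, m x) ≤ ∫ x in (0:ℝ)..1, (fun _ => k) x := by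
        apply intervalIntegral.integral_mono_on (by norm_num)
        · exact hm.continuous.intervalIntegrable _ _
        · exact intervalIntegrable_const
        · exact fun x _ => hB x
      simp [hmint] at hint2
      have hj2 : 1 ≤ j^2 := by
        nlinarith [mul_nonneg (by linarith : (0:ℝ) ≤ k - 1) (sq_nonneg k),
          mul_nonneg (by linarith : (0:ℝ) ≤ k - 1) (by linarith : (0:ℝ) ≤ k)]
      have : (1:ℝ) ≤ |j| := by nlinarith [sq_abs j, abs_nonneg j]
      exact le_trans (min_le_left _ _) this
    · -- both branches fail : contradiction via IVT and uniqueness of max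
      exfalso
      push_neg at hA hB
      obtain ⟨a, ha⟩ := hA
      obtain ⟨b, hb⟩ := hB
      set a' : ℝ := a - (⌊a - x₀⌋ : ℤ) with ha'def
      set b' : ℝ := b - (⌊b - x₀⌋ : ℤ) with hb'def
      have hma' : m a' = m a := by
        have := hmp.sub_int_mul_eq (x := a) ⌊a - x₀⌋
        simpa [ha'def] using this
      have hmb' : m b' = m b := by
        have := hmp.sub_int_mul_eq (x := b) ⌊b - x₀⌋
        simpa [hb'def] using this
      have ha'1 : x₀ ≤ a' := by
        rw [ha'def]; linarith [Int.floor_le (a - x₀)]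
      have ha'2 : a' < x₀ + 1 := by
        rw [ha'def]; linarith [Int.sub_one_lt_floor (a - x₀)]
      have hb'1 : x₀ ≤ b' := by
        rw [hb'def]; linarith [Int.floor_le (b - x₀)]
      have hb'2 : b' < x₀ + 1 := by
        rw [hb'def]; linarith [Int.sub_one_lt_floor (b - x₀)]
      have hivt := intermediate_value_uIcc (a := a') (b := b') (f := m)
        (hm.continuous.continuousOn)
      have hkmem : k ∈ Set.uIcc (m a') (m b') := by
        rw [hma', hmb']
        exact Set.mem_uIcc.mpr (Or.inl ⟨le_of_lt ha, le_of_lt hb⟩)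
      obtain ⟨z, hz, hzk⟩ := hivt hkmem
      have hza : z ≠ a' := by
        intro h; rw [h, hma'] at hzk; linarith
      have hzb : z ≠ b' := by
        intro h; rw [h, hmb'] at hzk; linarith
      have hzx : x₀ < z ∧ z < x₀ + 1 := by
        rcases Set.mem_uIcc.mp hz with ⟨h1, h2⟩ | ⟨h1, h2⟩
        · have := lt_of_le_of_ne h1 (Ne.symm hza)
          exact ⟨by linarith, by linarith⟩
        · have := lt_of_le_of_ne h1 (Ne.symm hzb)
          exact ⟨by linarith, by linarith⟩
      have hkpos : 0 < k := hzk ▸ hm0 z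
      -- from the equations at z : V z = H - 3/2 k ≥ M, hence V z = M
      have hjz := hj z
      rw [hzk] at hjz
      have hdz2 : (deriv u z + p) ^ 2 = k := by
        have hsq : (k * (deriv u z + p)) ^ 2 = j ^ 2 := by rw [hjz]
        have h2' : k ^ 2 * (deriv u z + p) ^ 2 = k ^ 2 * k := by
          linear_combination hsq - hk3
        exact mul_left_cancel₀ (by positivity) h2'
      have hHJz := hHJ z
      rw [hzk, hdz2] at hHJz
      have hVzM : V z = M := by
        have hle : V z ≤ M := hM.2 (Set.mem_range_self z)
        have hge : M ≤ V z := by linarith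
        linarith
      by_cases hz1 : z < 1
      · have h := hVuniq z ⟨by linarith [hx₀.1], hz1⟩ hVzM
        linarith [hzx.1]
      · push_neg at hz1
        have hVw : V (z - 1) = M := by
          have := hVp (z - 1)
          rw [sub_add_cancel] at this
          rw [← this]; exact hVzM
        have h := hVuniq (z - 1) ⟨by linarith, by linarith [hx₀.2]⟩ hVw
        linarith [hzx.2]
end

section
/- Suppose that V attains its maximum over [0,1) at exactly one point. Then the following are equivalent: (1) there exist p, H̄ ∈ ℝ, a C¹, 1-periodic function u : ℝ → ℝ, and a continuous, 1-periodic function m : ℝ → [0,∞) with ∫₀¹ m(x) dx = 1, such that (u'(x)+p)²/2 + m(x) + V(x) = H̄ and m(x)·(u'(x)+p) = 0 for all x ∈ ℝ; (2) max V − ∫₀¹ V(x) dx ≤ 1. -/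
open MeasureTheory Set

/-- when `V` has a single maximum point on `[0,1)`, the
zero-current stationary MFG with coupling `g(m) = −m` admits a solution with
continuous density iff `max V − ∫₀¹ V ≤ 1`. -/
theorem stmt_15
    (V : ℝ → ℝ) (hVc : Continuous V) (hVp : Function.Periodic V 1)
    (M : ℝ) (hM : IsGreatest (Set.range V) M)
    (x₀ : ℝ) (hx₀ : x₀ ∈ Set.Ico (0:ℝ) 1) (hVx₀ : V x₀ = M)
    (hVuniq : ∀ x ∈ Set.Ico (0:ℝ) 1, V x = M → x = x₀) :
    (∃ (p H : ℝ) (u m : ℝ → ℝ),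
      ContDiff ℝ 1 u ∧ Function.Periodic u 1 ∧
      Continuous m ∧ Function.Periodic m 1 ∧
      (∀ x, 0 ≤ m x) ∧ (∫ x in (0:ℝ)..1, m x) = 1 ∧
      (∀ x, (deriv u x + p) ^ 2 / 2 + m x + V x = H) ∧
      (∀ x, m x * (deriv u x + p) = 0)) ↔
    M - (∫ x in (0:ℝ)..1, V x) ≤ 1 := by
  have hVle : ∀ x, V x ≤ M := fun x => hM.2 ⟨x, rfl⟩
  constructor
  · rintro ⟨p, H, u, m, hu, hup, hmc, hmp, hm0, hmi, heq, hprod⟩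
    set φ : ℝ → ℝ := fun x => deriv u x + p with hφdef
    have hφc : Continuous φ := (hu.continuous_deriv le_rfl).add continuous_const
    have hφp : Function.Periodic φ 1 := by
      intro x
      have h1 : (fun y => u (y + 1)) = u := funext fun y => hup y
      have h2 : deriv u (x + 1) = deriv u x := by
        conv_rhs => rw [← h1, deriv_comp_add_const]
      simp only [hφdef, h2]
    have hHge : ∀ x, V x ≤ H := by
      intro x
      have := heq x
      nlinarith [sq_nonneg (φ x), hm0 x]
    -- key claim : φ ≡ 0
    have hφ0 : ∀ x, φ x = 0 := by
      by_contra hcon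
      push_neg at hcon
      obtain ⟨x₁, hx₁⟩ := hcon
      have hzex : ∃ z, φ z = 0 := by
        by_contra hz
        push_neg at hz
        have hm00 : ∀ x, m x = 0 := fun x =>
          (mul_eq_zero.1 (hprod x)).resolve_right (hz x)
        simp [hm00] at hmi
      obtain ⟨z, hzφ⟩ := hzex
      have hφshift : ∀ (n : ℤ), φ (z - n) = 0 := by
        intro n
        have := hφp.sub_int_mul_eq (x := z) n
        simpa using this.trans hzφ
      -- the two closed sets
      have hZa : IsClosed {x : ℝ | φ x = 0 ∧ x ≤ x₁} := by
        exact (isClosed_eq hφc continuous_const).inter isClosed_Iic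
      have hZb : IsClosed {x : ℝ | φ x = 0 ∧ x₁ ≤ x} := by
        exact (isClosed_eq hφc continuous_const).inter isClosed_Ici
      have hane : {x : ℝ | φ x = 0 ∧ x ≤ x₁}.Nonempty := by
        refine ⟨z - ⌈z - x₁⌉, hφshift _, ?_⟩
        have := Int.le_ceil (z - x₁)
        linarith
      have hbne : {x : ℝ | φ x = 0 ∧ x₁ ≤ x}.Nonempty := by
        refine ⟨z - ((-⌈x₁ - z⌉ : ℤ) : ℝ), hφshift _, ?_⟩
        have := Int.le_ceil (x₁ - z)
        push_cast
        linarith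
      have hbdda : BddAbove {x : ℝ | φ x = 0 ∧ x ≤ x₁} := ⟨x₁, fun x hx => hx.2⟩
      have hbddb : BddBelow {x : ℝ | φ x = 0 ∧ x₁ ≤ x} := ⟨x₁, fun x hx => hx.2⟩
      set a := sSup {x : ℝ | φ x = 0 ∧ x ≤ x₁} with hadef
      set b := sInf {x : ℝ | φ x = 0 ∧ x₁ ≤ x} with hbdef
      have ha : φ a = 0 ∧ a ≤ x₁ := hZa.csSup_mem hane hbdda
      have hb : φ b = 0 ∧ x₁ ≤ b := hZb.csInf_mem hbne hbddb
      have hax : a < x₁ := lt_of_le_of_ne ha.2 (fun h => hx₁ (h ▸ ha.1))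
      have hxb : x₁ < b := lt_of_le_of_ne hb.2 (fun h => hx₁ (h ▸ hb.1))
      have hab : a < b := hax.trans hxb
      have hφne : ∀ x ∈ Ioo a b, φ x ≠ 0 := by
        rintro x ⟨hxa, hxb'⟩ hxz
        rcases le_total x x₁ with h | h
        · exact absurd (le_csSup hbdda ⟨hxz, h⟩) (not_le.2 hxa)
        · exact absurd (csInf_le hbddb ⟨hxz, h⟩) (not_le.2 hxb')
      have hmIoo : ∀ x ∈ Ioo a b, m x = 0 := fun x hx =>
        (mul_eq_zero.1 (hprod x)).resolve_right (hφne x hx)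
      have hmIcc : ∀ x ∈ Icc a b, m x = 0 := by
        have hcl : IsClosed {x : ℝ | m x = 0} := isClosed_eq hmc continuous_const
        have h1 : closure (Ioo a b) ⊆ {x : ℝ | m x = 0} :=
          closure_minimal (fun x hx => hmIoo x hx) hcl
        rw [closure_Ioo hab.ne] at h1
        exact fun x hx => h1 hx
      have hVIcc : ∀ x ∈ Icc a b, φ x ^ 2 / 2 + V x = H := by
        have hcl : IsClosed {x : ℝ | φ x ^ 2 / 2 + V x = H} :=
          isClosed_eq (by fun_prop) continuous_const
        have h1 : closure (Ioo a b) ⊆ {x : ℝ | φ x ^ 2 / 2 + V x = H} := by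
          refine closure_minimal (fun x hx => ?_) hcl
          have := heq x
          have := hmIoo x hx
          simp only [mem_setOf_eq]
          linarith [heq x, hmIoo x hx]
        rw [closure_Ioo hab.ne] at h1
        exact fun x hx => h1 hx
      have hVa : V a = H := by
        have := hVIcc a ⟨le_refl a, hab.le⟩
        rw [ha.1] at this; linarith
      have hVb : V b = H := by
        have := hVIcc b ⟨hab.le, le_refl b⟩
        rw [hb.1] at this; linarith
      have hHM : H = M := le_antisymm (hVa ▸ hVle a) (hVx₀ ▸ hHge x₀)
      -- a and b are integer translates of x₀
      have hfract : ∀ c : ℝ, V c = M → c - x₀ = ⌊c⌋ := by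
        intro c hc
        have h1 : V (Int.fract c) = V c := by
          show V (c - ⌊c⌋) = V c
          simpa using hVp.sub_int_mul_eq (x := c) ⌊c⌋
        have h2 : Int.fract c = x₀ :=
          hVuniq _ ⟨Int.fract_nonneg c, Int.fract_lt_one c⟩ (h1.trans hc)
        have : Int.fract c = c - ⌊c⌋ := rfl
        linarith [this ▸ h2]
      have hfa : a - x₀ = ⌊a⌋ := hfract a (hVa.trans hHM)
      have hfb : b - x₀ = ⌊b⌋ := hfract b (hVb.trans hHM)
      have hfloorlt : (⌊a⌋ : ℤ) < ⌊b⌋ := by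
        have : (⌊a⌋ : ℝ) < ⌊b⌋ := by linarith
        exact_mod_cast this
      have hb1 : a + 1 ≤ b := by
        have : (⌊a⌋ : ℝ) + 1 ≤ ⌊b⌋ := by exact_mod_cast hfloorlt
        linarith
      -- m vanishes on a full period: contradiction with ∫ m = 1
      have hint : (∫ x in (0:ℝ)..1, m x) = ∫ x in a..(a+1), m x := by
        have := hmp.intervalIntegral_add_eq 0 a
        simpa using this
      have hzero : (∫ x in a..(a+1), m x) = 0 := by
        rw [intervalIntegral.integral_congr (g := fun _ => (0:ℝ))
          (fun x hx => by
            rw [uIcc_of_le (by linarith : a ≤ a + 1)] at hx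
            exact hmIcc x ⟨hx.1, le_trans hx.2 hb1⟩)]
        simp
      rw [hint, hzero] at hmi
      norm_num at hmi
    -- from φ ≡ 0 conclude
    have hmeq : ∀ x, m x = H - V x := by
      intro x
      have := heq x
      rw [show deriv u x + p = φ x from rfl, hφ0 x] at this
      linarith
    have hintm : (∫ x in (0:ℝ)..1, m x) = H - ∫ x in (0:ℝ)..1, V x := by
      rw [intervalIntegral.integral_congr (g := fun x => H - V x)
        (fun x _ => hmeq x)]
      rw [intervalIntegral.integral_sub intervalIntegrable_const
        (hVc.intervalIntegrable 0 1)]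
      simp
    rw [hintm] at hmi
    have := hHge x₀
    rw [hVx₀] at this
    linarith
  · intro h
    refine ⟨0, 1 + ∫ x in (0:ℝ)..1, V x, fun _ => 0,
      fun x => 1 + (∫ x in (0:ℝ)..1, V x) - V x,
      contDiff_const, fun x => rfl, by fun_prop, ?_, ?_, ?_, ?_, ?_⟩
    · intro x; simp [hVp x]
    · intro x
      have := hVle x
      simp only
      linarith
    · rw [intervalIntegral.integral_sub intervalIntegrable_const
        (hVc.intervalIntegrable 0 1)]
      simp
    · intro x
      simp
    · intro x
      simp
end

section
/- There exists J > 0 such that α⁻(j) ≥ 1 for all j ≥ J; for such j, let H̄_j be the unique H ≥ H_j^{cr} with ∫₀¹ m⁻_H(x) dx = 1 and set m_j := m⁻_{H̄_j}. Then, as j → +∞: H̄_j → +∞, 2 H̄_j / j² → 1, and m_j(x) → 1 for every x ∈ ℝ. -/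
open MeasureTheory Filter

private lemma div_sqrt_le' {j m D : ℝ} (hm : 0 < m) (hD : 0 < D) (h : j ^ 2 ≤ D * m ^ 2) :
    j / Real.sqrt D ≤ m := by
  have hsD : 0 < Real.sqrt D := Real.sqrt_pos.mpr hD
  rw [div_le_iff₀ hsD]
  calc j ≤ Real.sqrt (j ^ 2) := by rw [Real.sqrt_sq_eq_abs]; exact le_abs_self j
    _ ≤ Real.sqrt ((m * Real.sqrt D) ^ 2) := by
        apply Real.sqrt_le_sqrt
        rw [mul_pow, Real.sq_sqrt hD.le]; nlinarith
    _ = m * Real.sqrt D := Real.sqrt_sq (by positivity)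

private lemma le_div_sqrt' {j m D : ℝ} (hj : 0 ≤ j) (hm : 0 < m) (hD : 0 < D)
    (h : D * m ^ 2 ≤ j ^ 2) : m ≤ j / Real.sqrt D := by
  have hsD : 0 < Real.sqrt D := Real.sqrt_pos.mpr hD
  rw [le_div_iff₀ hsD]
  calc m * Real.sqrt D = Real.sqrt (D * m ^ 2) := by
        rw [Real.sqrt_mul hD.le, Real.sqrt_sq hm.le]; ring
    _ ≤ Real.sqrt (j ^ 2) := Real.sqrt_le_sqrt h
    _ = j := Real.sqrt_sq hj

private lemma f_strictAntiOn' {j : ℝ} (hj : 0 < j) :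
    StrictAntiOn (fun t => j ^ 2 / (2 * t ^ 2) + t) (Set.Ioc 0 (j ^ ((2:ℝ)/3))) := by
  intro s hs t ht hst
  obtain ⟨hs0, hsa⟩ := hs
  obtain ⟨ht0, hta⟩ := ht
  have hcube : t ^ 3 ≤ j ^ 2 := by
    have h2 : (j ^ ((2:ℝ)/3)) ^ (3:ℕ) = j ^ 2 := by
      rw [← Real.rpow_natCast (j ^ ((2:ℝ)/3)) 3, ← Real.rpow_mul hj.le]
      norm_num
    calc t ^ 3 ≤ (j ^ ((2:ℝ)/3)) ^ 3 := pow_le_pow_left₀ ht0.le hta 3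
      _ = j ^ 2 := h2
  have h1 : s ^ 2 * t ^ 2 ≤ s * t ^ 3 := by
    have := mul_le_mul_of_nonneg_left hst.le (by positivity : (0:ℝ) ≤ s * t ^ 2)
    nlinarith
  have h2 : s * t ^ 3 ≤ s * j ^ 2 := mul_le_mul_of_nonneg_left hcube hs0.le
  have h3 : j ^ 2 * (2 * s) < j ^ 2 * (s + t) :=
    mul_lt_mul_of_pos_left (by linarith) (by positivity)
  have key : 2 * s ^ 2 * t ^ 2 < j ^ 2 * (s + t) := by nlinarith
  have hs2 : (0:ℝ) < 2 * s ^ 2 := by positivity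
  have ht2 : (0:ℝ) < 2 * t ^ 2 := by positivity
  show j ^ 2 / (2 * t ^ 2) + t < j ^ 2 / (2 * s ^ 2) + s
  rw [div_add' _ _ _ (ne_of_gt ht2), div_add' _ _ _ (ne_of_gt hs2),
    div_lt_div_iff₀ ht2 hs2]
  nlinarith

private lemma cont_inv' {a : ℝ} {f u m : ℝ → ℝ} (hf : StrictAntiOn f (Set.Ioc 0 a))
    (hu : Continuous u) (hm : ∀ x, m x ∈ Set.Ioc 0 a ∧ f (m x) = u x) : Continuous m := by
  rw [Metric.continuous_iff]
  intro x₀ ε hε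
  obtain ⟨⟨hm0, hma⟩, hfeq⟩ := hm x₀
  set ε' := min (ε / 2) (m x₀ / 2) with hε'def
  have hε'0 : 0 < ε' := lt_min (by linarith) (by linarith)
  have hε'm : ε' < m x₀ := lt_of_le_of_lt (min_le_right _ _) (by linarith)
  have hε'ε : ε' < ε := lt_of_le_of_lt (min_le_left _ _) (by linarith)
  have ht1 : m x₀ - ε' ∈ Set.Ioc 0 a := ⟨by linarith, by linarith⟩
  have hδ1 : 0 < f (m x₀ - ε') - u x₀ := by
    have := hf ht1 ⟨hm0, hma⟩ (by linarith)
    rw [hfeq] at this; linarith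
  have upper : ∃ δ₂ > 0, ∀ x, |u x - u x₀| < δ₂ → m x < m x₀ + ε' := by
    by_cases hcase : m x₀ + ε' ≤ a
    · refine ⟨u x₀ - f (m x₀ + ε'), ?_, ?_⟩
      · have := hf ⟨hm0, hma⟩ ⟨by linarith, hcase⟩ (by linarith)
        rw [hfeq] at this; linarith
      · intro x hx
        by_contra hge
        push_neg at hge
        obtain ⟨⟨hx0, hxa⟩, hxe⟩ := hm x
        have hle : f (m x) ≤ f (m x₀ + ε') :=
          hf.antitoneOn ⟨by linarith, hcase⟩ ⟨hx0, hxa⟩ hge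
        rw [hxe] at hle
        have habs := abs_lt.mp hx
        linarith
    · refine ⟨1, one_pos, fun x _ => ?_⟩
      obtain ⟨⟨hx0, hxa⟩, _⟩ := hm x
      push_neg at hcase; linarith
  have lower : ∀ x, |u x - u x₀| < f (m x₀ - ε') - u x₀ → m x₀ - ε' < m x := by
    intro x hx
    by_contra hle; push_neg at hle
    obtain ⟨⟨hx0, hxa⟩, hxe⟩ := hm x
    have h := hf.antitoneOn ⟨hx0, hxa⟩ ht1 hle
    rw [hxe] at h
    have habs := abs_lt.mp hx
    linarith
  obtain ⟨δ₂, hδ₂pos, hupper⟩ := upper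
  obtain ⟨δ, hδpos, hδ⟩ :=
    Metric.continuous_iff.mp hu x₀ (min (f (m x₀ - ε') - u x₀) δ₂) (lt_min hδ1 hδ₂pos)
  refine ⟨δ, hδpos, fun x hx => ?_⟩
  have hd := hδ x hx
  rw [Real.dist_eq] at hd ⊢
  have h1 := lower x (lt_of_lt_of_le hd (min_le_left _ _))
  have h2 := hupper x (lt_of_lt_of_le hd (min_le_right _ _))
  rw [abs_lt]; constructor <;> linarith

private lemma tendsto_j_div_sqrt' {e : ℝ → ℝ}
    (he : Tendsto (fun j => e j / j ^ 2) atTop (nhds 0)) :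
    Tendsto (fun j : ℝ => j / Real.sqrt (j ^ 2 + e j)) atTop (nhds 1) := by
  have h1 : Tendsto (fun j : ℝ => 1 / Real.sqrt (1 + e j / j ^ 2)) atTop (nhds 1) := by
    have h2 : Tendsto (fun j : ℝ => 1 + e j / j ^ 2) atTop (nhds 1) := by
      have := he.const_add 1; simpa using this
    have h3 := h2.sqrt
    rw [Real.sqrt_one] at h3
    simpa [Pi.div_def, one_div] using
      (tendsto_const_nhds (x := (1:ℝ))).div h3 one_ne_zero
  apply h1.congr'
  have hsmall : ∀ᶠ j : ℝ in atTop, |e j / j ^ 2| < 1/2 := by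
    have := he.eventually (eventually_abs_sub_lt 0 (by norm_num : (0:ℝ) < 1/2))
    simpa using this
  filter_upwards [hsmall, eventually_gt_atTop (0:ℝ)] with j hj hj0
  have hj2 : (0:ℝ) < j ^ 2 := by positivity
  have key : j ^ 2 + e j = j ^ 2 * (1 + e j / j ^ 2) := by field_simp
  rw [key, Real.sqrt_mul (by positivity), Real.sqrt_sq hj0.le]
  rw [abs_lt] at hj
  have hpos : 0 < 1 + e j / j ^ 2 := by linarith
  rw [eq_comm, div_eq_div_iff (by positivity) (by positivity)]
  ring

private lemma tendsto_c_div_sq (c : ℝ) : Tendsto (fun j : ℝ => c / j ^ 2) atTop (nhds 0) :=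
  tendsto_const_nhds.div_atTop (tendsto_pow_atTop two_ne_zero)

private lemma tendsto_rpow_div_sq :
    Tendsto (fun j : ℝ => j ^ ((2:ℝ)/3) / j ^ 2) atTop (nhds 0) := by
  apply Tendsto.congr' _ (tendsto_rpow_neg_atTop (by norm_num : (0:ℝ) < 4/3))
  filter_upwards [eventually_gt_atTop (0:ℝ)] with j hj0
  rw [show (-(4/3) : ℝ) = 2/3 - 2 by norm_num, Real.rpow_sub hj0]
  congr 1
  rw [show ((2:ℝ)) = ((2:ℕ) : ℝ) by norm_num, Real.rpow_natCast]

/-- high-current asymptotics. For large `j` we have `α⁻(j) ≥ 1`;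
letting `H̄_j ≥ H_j^{cr}` be the level with `∫₀¹ m⁻_{H̄_j} = 1` and
`m_j := m⁻_{H̄_j}`, as `j → ∞` we have `H̄_j → ∞`, `2H̄_j/j² → 1`, and
`m_j(x) → 1` for every `x`. Here `mm j H x` denotes the small branch `m⁻_H(x)`
of solutions of `j²/(2t²) + t = H − V(x)`. -/
theorem stmt_16
    (V : ℝ → ℝ) (hVc : Continuous V) (hVp : Function.Periodic V 1)
    (M : ℝ) (hM : IsGreatest (Set.range V) M)
    (mm : ℝ → ℝ → ℝ → ℝ)
    (hmm : ∀ j H x, 0 < j → M + 3 / 2 * j ^ ((2:ℝ)/3) ≤ H →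
      0 < mm j H x ∧ mm j H x ≤ j ^ ((2:ℝ)/3) ∧
      j ^ 2 / (2 * (mm j H x) ^ 2) + mm j H x = H - V x) :
    ∃ J > 0,
      (∀ j, J ≤ j →
        1 ≤ ∫ x in (0:ℝ)..1, mm j (M + 3 / 2 * j ^ ((2:ℝ)/3)) x) ∧
      ∀ Hb : ℝ → ℝ,
        (∀ j, J ≤ j → M + 3 / 2 * j ^ ((2:ℝ)/3) ≤ Hb j ∧
          (∫ x in (0:ℝ)..1, mm j (Hb j) x) = 1) →
        Tendsto Hb atTop atTop ∧
        Tendsto (fun j => 2 * Hb j / j ^ 2) atTop (nhds 1) ∧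
        ∀ x, Tendsto (fun j => mm j (Hb j) x) atTop (nhds 1) := by
  obtain ⟨xB, hxBmem, hxBmin⟩ :=
    isCompact_Icc.exists_isMinOn (Set.nonempty_Icc.mpr zero_le_one)
      hVc.continuousOn (α := ℝ)
  set B := V xB with hBdef
  have hVB : ∀ x, B ≤ V x := by
    intro x
    have hfr : V (Int.fract x) = V x := by
      have h2 := hVp.sub_int_mul_eq (x := x) ⌊x⌋
      rw [mul_one] at h2; rw [Int.fract, h2]
    rw [← hfr]
    exact isMinOn_iff.mp hxBmin _ ⟨Int.fract_nonneg x, (Int.fract_lt_one x).le⟩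
  have hVM : ∀ x, V x ≤ M := fun x => hM.2 ⟨x, rfl⟩
  have hBM : B ≤ M := hVM xB
  set C := M - B with hCdef
  have hC : 0 ≤ C := by simp [hCdef]; linarith
  -- key pointwise bounds
  have key : ∀ j H x, 2 * C + 4 ≤ j → M + 3 / 2 * j ^ ((2:ℝ)/3) ≤ H →
      0 < 2 * (H - B) ∧ 0 < 2 * (H - M - j ^ ((2:ℝ)/3)) ∧
      j / Real.sqrt (2 * (H - B)) ≤ mm j H x ∧
      mm j H x ≤ j / Real.sqrt (2 * (H - M - j ^ ((2:ℝ)/3))) := by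
    intro j H x hj hH
    have hj0 : (0:ℝ) < j := by linarith
    have ha0 : 0 < j ^ ((2:ℝ)/3) := Real.rpow_pos_of_pos hj0 _
    obtain ⟨hm0, hma, heq⟩ := hmm j H x hj0 hH
    have hm2 : (0:ℝ) < (mm j H x) ^ 2 := by positivity
    have hD : 0 < 2 * (H - B) := by linarith
    have hD' : 0 < 2 * (H - M - j ^ ((2:ℝ)/3)) := by linarith
    have h6 : j ^ 2 / (2 * (mm j H x) ^ 2) = H - V x - mm j H x := by linarith
    have h5 : j ^ 2 = (H - V x - mm j H x) * (2 * (mm j H x) ^ 2) := by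
      rw [← h6, div_mul_cancel₀ _ (by positivity)]
    refine ⟨hD, hD', ?_, ?_⟩
    · apply div_sqrt_le' hm0 hD
      have h7 : H - V x - mm j H x ≤ H - B := by
        have := hVB x; linarith
      nlinarith
    · apply le_div_sqrt' hj0.le hm0 hD'
      have h7 : H - M - j ^ ((2:ℝ)/3) ≤ H - V x - mm j H x := by
        have := hVM x; linarith
      nlinarith
  refine ⟨2 * C + 4, by linarith, ?_, ?_⟩
  · -- Part 1
    intro j hj
    have hj0 : (0:ℝ) < j := by linarith
    have hj1 : (1:ℝ) ≤ j := by linarith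
    have haj : j ^ ((2:ℝ)/3) ≤ j := by
      calc j ^ ((2:ℝ)/3) ≤ j ^ (1:ℝ) :=
            Real.rpow_le_rpow_of_exponent_le hj1 (by norm_num)
        _ = j := Real.rpow_one j
    have ha0 : 0 < j ^ ((2:ℝ)/3) := Real.rpow_pos_of_pos hj0 _
    set H := M + 3 / 2 * j ^ ((2:ℝ)/3) with hHdef
    have hH : M + 3 / 2 * j ^ ((2:ℝ)/3) ≤ H := le_refl _
    have hcont : Continuous (fun x => mm j H x) := by
      apply cont_inv' (f_strictAntiOn' hj0) (continuous_const.sub hVc)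
      intro x
      obtain ⟨hm0, hma, heq⟩ := hmm j H x hj0 hH
      exact ⟨⟨hm0, hma⟩, heq⟩
    have hpt : ∀ x ∈ Set.Icc (0:ℝ) 1, (1:ℝ) ≤ mm j H x := by
      intro x _
      obtain ⟨hD, hD', hlow, hup⟩ := key j H x hj hH
      have h2 : 2 * (H - B) = 2 * C + 3 * j ^ ((2:ℝ)/3) := by
        rw [hHdef, hCdef]; ring
      have h3 : 2 * C + 3 * j ^ ((2:ℝ)/3) ≤ j ^ 2 := by nlinarith
      have h4 : Real.sqrt (2 * (H - B)) ≤ j := by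
        rw [h2]
        calc Real.sqrt (2 * C + 3 * j ^ ((2:ℝ)/3)) ≤ Real.sqrt (j ^ 2) :=
              Real.sqrt_le_sqrt h3
          _ = j := Real.sqrt_sq hj0.le
      have hs : 0 < Real.sqrt (2 * (H - B)) := Real.sqrt_pos.mpr hD
      have h5 : (1:ℝ) ≤ j / Real.sqrt (2 * (H - B)) := by
        rw [le_div_iff₀ hs, one_mul]; exact h4
      linarith
    calc (1:ℝ) = ∫ _x in (0:ℝ)..1, (1:ℝ) := by simp
      _ ≤ ∫ x in (0:ℝ)..1, mm j H x :=
          intervalIntegral.integral_mono_on zero_le_one intervalIntegrable_const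
            (hcont.intervalIntegrable 0 1) hpt
  · -- Part 2
    intro Hb hHb
    have hbounds : ∀ j, 2 * C + 4 ≤ j →
        j ^ 2 ≤ 2 * (Hb j - B) ∧ 2 * (Hb j - M - j ^ ((2:ℝ)/3)) ≤ j ^ 2 := by
      intro j hj
      have hj0 : (0:ℝ) < j := by linarith
      obtain ⟨hH, hI⟩ := hHb j hj
      have hint : IntervalIntegrable (fun x => mm j (Hb j) x) volume 0 1 := by
        by_contra hni
        have h0 := intervalIntegral.integral_undef hni
        rw [hI] at h0
        norm_num at h0
      obtain ⟨hD, hD', hlow0, hup0⟩ := key j (Hb j) 0 hj hH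
      have hsD : 0 < Real.sqrt (2 * (Hb j - B)) := Real.sqrt_pos.mpr hD
      have hsD' : 0 < Real.sqrt (2 * (Hb j - M - j ^ ((2:ℝ)/3))) := Real.sqrt_pos.mpr hD'
      have hL1 : j / Real.sqrt (2 * (Hb j - B)) ≤ 1 := by
        have hmono : ∀ x ∈ Set.Icc (0:ℝ) 1,
            j / Real.sqrt (2 * (Hb j - B)) ≤ mm j (Hb j) x := fun x _ =>
          (key j (Hb j) x hj hH).2.2.1
        calc j / Real.sqrt (2 * (Hb j - B))
            = ∫ _x in (0:ℝ)..1, j / Real.sqrt (2 * (Hb j - B)) := by simp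
          _ ≤ ∫ x in (0:ℝ)..1, mm j (Hb j) x :=
              intervalIntegral.integral_mono_on zero_le_one intervalIntegrable_const
                hint hmono
          _ = 1 := hI
      have hU1 : 1 ≤ j / Real.sqrt (2 * (Hb j - M - j ^ ((2:ℝ)/3))) := by
        have hmono : ∀ x ∈ Set.Icc (0:ℝ) 1,
            mm j (Hb j) x ≤ j / Real.sqrt (2 * (Hb j - M - j ^ ((2:ℝ)/3))) := fun x _ =>
          (key j (Hb j) x hj hH).2.2.2
        calc (1:ℝ) = ∫ x in (0:ℝ)..1, mm j (Hb j) x := hI.symm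
          _ ≤ ∫ _x in (0:ℝ)..1, j / Real.sqrt (2 * (Hb j - M - j ^ ((2:ℝ)/3))) :=
              intervalIntegral.integral_mono_on zero_le_one hint
                intervalIntegrable_const hmono
          _ = j / Real.sqrt (2 * (Hb j - M - j ^ ((2:ℝ)/3))) := by simp
      constructor
      · have h1 : j ≤ Real.sqrt (2 * (Hb j - B)) := by
          rw [div_le_one hsD] at hL1; exact hL1
        calc j ^ 2 ≤ Real.sqrt (2 * (Hb j - B)) ^ 2 := pow_le_pow_left₀ hj0.le h1 2
          _ = 2 * (Hb j - B) := Real.sq_sqrt hD.le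
      · have h1 : Real.sqrt (2 * (Hb j - M - j ^ ((2:ℝ)/3))) ≤ j := by
          rw [le_div_iff₀ hsD', one_mul] at hU1; exact hU1
        calc 2 * (Hb j - M - j ^ ((2:ℝ)/3))
            = Real.sqrt (2 * (Hb j - M - j ^ ((2:ℝ)/3))) ^ 2 := (Real.sq_sqrt hD'.le).symm
          _ ≤ j ^ 2 := pow_le_pow_left₀ (Real.sqrt_nonneg _) h1 2
    have hajle : ∀ j : ℝ, 1 ≤ j → j ^ ((2:ℝ)/3) ≤ j := fun j hj1 => by
      calc j ^ ((2:ℝ)/3) ≤ j ^ (1:ℝ) :=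
            Real.rpow_le_rpow_of_exponent_le hj1 (by norm_num)
        _ = j := Real.rpow_one j
    refine ⟨?_, ?_, ?_⟩
    · -- Hb → ∞
      apply tendsto_atTop_mono' atTop
        (f₁ := fun j => M + 3 / 2 * j ^ ((2:ℝ)/3))
      · filter_upwards [eventually_ge_atTop (2 * C + 4)] with j hj
        exact (hHb j hj).1
      · exact tendsto_atTop_add_const_left _ M
          (Tendsto.const_mul_atTop (by norm_num) (tendsto_rpow_atTop (by norm_num)))
    · -- 2 Hb / j² → 1
      have hg : Tendsto (fun j : ℝ => (j ^ 2 + 2 * B) / j ^ 2) atTop (nhds 1) := by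
        have hlim0 : Tendsto (fun j : ℝ => 1 + 2 * B / j ^ 2) atTop (nhds 1) := by
          have := (tendsto_const_nhds (x := (1:ℝ))).add (tendsto_c_div_sq (2 * B))
          simpa using this
        apply Tendsto.congr' _ hlim0
        filter_upwards [eventually_gt_atTop (0:ℝ)] with j hj0
        rw [add_div, div_self (by positivity : (j:ℝ) ^ 2 ≠ 0)]
      have hh : Tendsto (fun j : ℝ => (j ^ 2 + (2 * M + 2 * j ^ ((2:ℝ)/3))) / j ^ 2)
          atTop (nhds 1) := by
        have hlim : Tendsto (fun j : ℝ => 1 + (2 * M / j ^ 2 + 2 * (j ^ ((2:ℝ)/3) / j ^ 2)))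
            atTop (nhds 1) := by
          have := (tendsto_const_nhds (x := (1:ℝ))).add
            ((tendsto_c_div_sq (2 * M)).add ((tendsto_rpow_div_sq).const_mul 2))
          simpa using this
        apply Tendsto.congr' _ hlim
        filter_upwards [eventually_gt_atTop (0:ℝ)] with j hj0
        field_simp
      apply tendsto_of_tendsto_of_tendsto_of_le_of_le' hg hh
      · filter_upwards [eventually_ge_atTop (2 * C + 4)] with j hj
        have hj0 : (0:ℝ) < j := by linarith
        have h1 := (hbounds j hj).1
        have h2 : j ^ 2 + 2 * B ≤ 2 * Hb j := by linarith
        gcongr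
      · filter_upwards [eventually_ge_atTop (2 * C + 4)] with j hj
        have hj0 : (0:ℝ) < j := by linarith
        have h1 := (hbounds j hj).2
        have h2 : 2 * Hb j ≤ j ^ 2 + (2 * M + 2 * j ^ ((2:ℝ)/3)) := by linarith
        gcongr
    · -- pointwise convergence of m
      intro x
      have hel : Tendsto (fun j : ℝ => (2 * C + 2 * j ^ ((2:ℝ)/3)) / j ^ 2)
          atTop (nhds 0) := by
        have h0 := (tendsto_c_div_sq (2 * C)).add (tendsto_rpow_div_sq.const_mul 2)
        rw [show (0:ℝ) + 2 * 0 = 0 by norm_num] at h0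
        exact h0.congr fun j => by ring
      have hlb : Tendsto (fun j : ℝ =>
          j / Real.sqrt (j ^ 2 + (2 * C + 2 * j ^ ((2:ℝ)/3)))) atTop (nhds 1) :=
        tendsto_j_div_sqrt' hel
      have hub : Tendsto (fun j : ℝ =>
          j / Real.sqrt (j ^ 2 + (-(2 * C + 2 * j ^ ((2:ℝ)/3))))) atTop (nhds 1) :=
        tendsto_j_div_sqrt' (e := fun j => -(2 * C + 2 * j ^ ((2:ℝ)/3))) (by
          have h0 := hel.neg
          rw [neg_zero] at h0
          exact h0.congr fun j => (neg_div _ _).symm)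
      apply tendsto_of_tendsto_of_tendsto_of_le_of_le' hlb hub
      · filter_upwards [eventually_ge_atTop (2 * C + 4)] with j hj
        have hj0 : (0:ℝ) < j := by linarith
        have hj1 : (1:ℝ) ≤ j := by linarith
        have haj := hajle j hj1
        obtain ⟨hD, hD', hlow, hup⟩ := key j (Hb j) x hj (hHb j hj).1
        have hb1 := (hbounds j hj).1
        have hb2 := (hbounds j hj).2
        have h1 : 2 * (Hb j - B) ≤ j ^ 2 + (2 * C + 2 * j ^ ((2:ℝ)/3)) := by
          rw [hCdef]; linarith
        have h2 : j / Real.sqrt (j ^ 2 + (2 * C + 2 * j ^ ((2:ℝ)/3))) ≤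
            j / Real.sqrt (2 * (Hb j - B)) :=
          div_le_div_of_nonneg_left hj0.le (Real.sqrt_pos.mpr hD) (Real.sqrt_le_sqrt h1)
        linarith
      · filter_upwards [eventually_ge_atTop (2 * C + 4)] with j hj
        have hj0 : (0:ℝ) < j := by linarith
        have hj1 : (1:ℝ) ≤ j := by linarith
        have haj := hajle j hj1
        have ha0 : 0 < j ^ ((2:ℝ)/3) := Real.rpow_pos_of_pos hj0 _
        obtain ⟨hD, hD', hlow, hup⟩ := key j (Hb j) x hj (hHb j hj).1
        have hb1 := (hbounds j hj).1
        have hb2 := (hbounds j hj).2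
        have hpos : 0 < j ^ 2 + (-(2 * C + 2 * j ^ ((2:ℝ)/3))) := by nlinarith
        have h1 : j ^ 2 + (-(2 * C + 2 * j ^ ((2:ℝ)/3))) ≤
            2 * (Hb j - M - j ^ ((2:ℝ)/3)) := by
          rw [hCdef] at *; linarith
        have h2 : j / Real.sqrt (2 * (Hb j - M - j ^ ((2:ℝ)/3))) ≤
            j / Real.sqrt (j ^ 2 + (-(2 * C + 2 * j ^ ((2:ℝ)/3)))) :=
          div_le_div_of_nonneg_left hj0.le (Real.sqrt_pos.mpr hpos) (Real.sqrt_le_sqrt h1)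
        linarith
end

section
/- Let 0 < j₁ < j₂ with α⁻(j₁) ≥ 1 (hence also α⁻(j₂) ≥ 1, since α⁻ is increasing). For i = 1, 2, let H̄_{jᵢ} be the unique H ≥ H_{jᵢ}^{cr} with ∫₀¹ m⁻_H(x) dx = 1 (where m⁻_H is the small branch associated with current jᵢ). Then H̄_{j₁} < H̄_{j₂}. -/
open MeasureTheory

private lemma stmt18_core (j₁ j₂ a b c₁ c₂ : ℝ) (hj₁ : 0 < j₁) (hj₁₂ : j₁ < j₂)
    (ha0 : 0 < a) (hb0 : 0 < b) (hba : b ≤ a) (ha3 : a^3 ≤ j₁^2)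
    (hc : c₂ ≤ c₁)
    (E1 : j₁^2 = (c₁ - a) * (2*a^2))
    (E2 : j₂^2 = (c₂ - b) * (2*b^2)) : False := by
  have hjsq : j₁^2 < j₂^2 := by nlinarith
  have hcmul : (c₂ - b) * (2*b^2) ≤ (c₁ - b) * (2*b^2) :=
    mul_le_mul_of_nonneg_right (by linarith) (by positivity)
  have h1 : 2*c₁*a^2 - 2*a^3 < 2*c₁*b^2 - 2*b^3 := by nlinarith [hcmul]
  have hc1 : 3*a ≤ 2*c₁ := by nlinarith [mul_pos ha0 ha0]
  have hsub : (0:ℝ) ≤ a^2 - b^2 := by nlinarith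
  have h3 : 3*a*(a^2-b^2) ≤ 2*c₁*(a^2-b^2) := mul_le_mul_of_nonneg_right hc1 hsub
  have h4 : (0:ℝ) ≤ (a-b)^2*(a+2*b) := by positivity
  nlinarith [h1, h3, h4]

/-- strict monotonicity of the effective Hamiltonian in the
high-current regime: if `0 < j₁ < j₂`, `α⁻(j₁) ≥ 1`, and `H̄_{jᵢ} ≥ H_{jᵢ}^{cr}`
satisfy `∫₀¹ m⁻_{H̄_{jᵢ}} = 1`, then `H̄_{j₁} < H̄_{j₂}`. Here `mm j H x` denotes
the small branch `m⁻_H(x)` of solutions of `j²/(2t²) + t = H − V(x)`. -/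
theorem stmt_18
    (V : ℝ → ℝ) (hVc : Continuous V) (hVp : Function.Periodic V 1)
    (M : ℝ) (hM : IsGreatest (Set.range V) M)
    (mm : ℝ → ℝ → ℝ → ℝ)
    (hmm : ∀ j H x, 0 < j → M + 3 / 2 * j ^ ((2:ℝ)/3) ≤ H →
      0 < mm j H x ∧ mm j H x ≤ j ^ ((2:ℝ)/3) ∧
      j ^ 2 / (2 * (mm j H x) ^ 2) + mm j H x = H - V x)
    (j₁ j₂ : ℝ) (hj₁ : 0 < j₁) (hj₁₂ : j₁ < j₂)
    (hα : 1 ≤ ∫ x in (0:ℝ)..1, mm j₁ (M + 3 / 2 * j₁ ^ ((2:ℝ)/3)) x)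
    (H₁ H₂ : ℝ)
    (hH₁cr : M + 3 / 2 * j₁ ^ ((2:ℝ)/3) ≤ H₁)
    (hH₁ : (∫ x in (0:ℝ)..1, mm j₁ H₁ x) = 1)
    (hH₂cr : M + 3 / 2 * j₂ ^ ((2:ℝ)/3) ≤ H₂)
    (hH₂ : (∫ x in (0:ℝ)..1, mm j₂ H₂ x) = 1) :
    H₁ < H₂ := by
  by_contra hcon
  push_neg at hcon
  have hj₂ : 0 < j₂ := hj₁.trans hj₁₂
  -- pointwise strict comparison under H₂ ≤ H₁
  have hpt : ∀ x, mm j₁ H₁ x < mm j₂ H₂ x := by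
    intro x
    obtain ⟨ha0, hac, hae⟩ := hmm j₁ H₁ x hj₁ hH₁cr
    obtain ⟨hb0, hbc, hbe⟩ := hmm j₂ H₂ x hj₂ hH₂cr
    by_contra hba
    push_neg at hba
    set a := mm j₁ H₁ x with hadef
    set b := mm j₂ H₂ x with hbdef
    have hpow : (j₁ ^ ((2:ℝ)/3)) ^ (3:ℕ) = j₁ ^ 2 := by
      rw [← Real.rpow_natCast (j₁ ^ ((2:ℝ)/3)) 3, ← Real.rpow_mul hj₁.le]
      norm_num
    have ha3 : a ^ 3 ≤ j₁ ^ 2 := by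
      calc a ^ 3 ≤ (j₁ ^ ((2:ℝ)/3)) ^ (3:ℕ) := pow_le_pow_left₀ ha0.le hac 3
        _ = j₁ ^ 2 := hpow
    have E1 : j₁ ^ 2 = (H₁ - V x - a) * (2 * a ^ 2) := by
      have h2 : (2*a^2) ≠ 0 := by positivity
      have hd : j₁^2 / (2*a^2) = H₁ - V x - a := by linarith
      exact (div_eq_iff h2).mp hd
    have E2 : j₂ ^ 2 = (H₂ - V x - b) * (2 * b ^ 2) := by
      have h2 : (2*b^2) ≠ 0 := by positivity
      have hd : j₂^2 / (2*b^2) = H₂ - V x - b := by linarith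
      exact (div_eq_iff h2).mp hd
    exact stmt18_core j₁ j₂ a b (H₁ - V x) (H₂ - V x) hj₁ hj₁₂ ha0 hb0 hba ha3
      (by linarith) E1 E2
  -- integrability (forced by the integrals being nonzero)
  have hi₁ : IntervalIntegrable (fun x => mm j₁ H₁ x) volume 0 1 := by
    by_contra h
    rw [intervalIntegral.integral_undef h] at hH₁
    norm_num at hH₁
  have hi₂ : IntervalIntegrable (fun x => mm j₂ H₂ x) volume 0 1 := by
    by_contra h
    rw [intervalIntegral.integral_undef h] at hH₂
    norm_num at hH₂
  have hzero : (∫ x in (0:ℝ)..1, (mm j₂ H₂ x - mm j₁ H₁ x)) = 0 := by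
    rw [intervalIntegral.integral_sub hi₂ hi₁, hH₂, hH₁]; ring
  have hpos : 0 < ∫ x in (0:ℝ)..1, (mm j₂ H₂ x - mm j₁ H₁ x) := by
    apply intervalIntegral.intervalIntegral_pos_of_pos_on (hi₂.sub hi₁)
    · intro x _
      have := hpt x
      linarith
    · norm_num
  linarith
end

section
/- Let 0 < j₁ < j₂ with α⁻(j₁) ≥ 1 (hence also α⁻(j₂) ≥ 1, since α⁻ is increasing). For i = 1, 2, let H̄_{jᵢ} be the unique H ≥ H_{jᵢ}^{cr} with ∫₀¹ m⁻_H(x) dx = 1, set m_{jᵢ} := m⁻_{H̄_{jᵢ}} and p_{jᵢ} := ∫₀¹ jᵢ / m_{jᵢ}(y) dy. Then p_{j₁} < p_{j₂}. -/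
/-!
Write `pᵢ = jᵢ / mᵢ`. The profile equation says `pᵢ² = 2 (Hᵢ - V - mᵢ)`, hence
`p₂ - p₁ = 2 ((H₂ - H₁) + (m₁ - m₂)) g` with `g = 1 / (p₁ + p₂) > 0`.
Equal masses force `H₁ < H₂`, since otherwise `m₁ < m₂` everywhere. On the lower branch
both `mᵢ` increase with `V`, and `m₁ - m₂` changes sign at most once, from negative to
positive, as `V` increases; so `g` is smaller where `m₁ < m₂` than where `m₂ < m₁`.
With a threshold `c` between these values and `∫ (m₁ - m₂) = 0`,
`∫ (m₁ - m₂) g = ∫ (m₁ - m₂) (g - c) ≥ 0`, and `∫ (p₂ - p₁) > 0` follows.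
-/

open MeasureTheory

noncomputable def energy (j m : ℝ) : ℝ := j ^ 2 / (2 * m ^ 2) + m

lemma energy_strictAntiOn {j : ℝ} (hj : 0 < j) :
    StrictAntiOn (energy j) (Set.Ioc 0 (j ^ ((2:ℝ)/3))) := by
  rintro s ⟨hs, -⟩ t ⟨-, ht⟩ hst
  have ht0 : 0 < t := hs.trans hst
  have hcube : t ^ 3 ≤ j ^ 2 := by
    calc t ^ 3 ≤ (j ^ ((2:ℝ)/3)) ^ 3 := by gcongr
      _ = j ^ 2 := by
        rw [← Real.rpow_natCast, ← Real.rpow_mul hj.le]; norm_num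
  -- `energy j s - energy j t = (t - s) (j² (s + t) - 2 s² t²) / (2 s² t²)`, and `t³ ≤ j²`
  have hkey : 2 * s ^ 2 * t ^ 2 < j ^ 2 * (s + t) := by
    nlinarith [mul_pos hs ht0, mul_pos (mul_pos hs ht0) (sub_pos.2 hst)]
  unfold energy
  rw [div_add' _ _ _ (by positivity), div_add' _ _ _ (by positivity),
    div_lt_div_iff₀ (by positivity) (by positivity)]
  nlinarith [mul_pos (sub_pos.2 hst) (sub_pos.2 hkey)]

lemma energy_lt_energy_of_lt {j₁ j₂ m : ℝ} (hj₁ : 0 ≤ j₁) (hj₁₂ : j₁ < j₂) (hm : 0 < m) :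
    energy j₁ m < energy j₂ m := by
  unfold energy
  gcongr

lemma energy_sub_energy_antitoneOn {j₁ j₂ : ℝ} (hj₁ : 0 ≤ j₁) (hj₁₂ : j₁ ≤ j₂) :
    AntitoneOn (fun m => energy j₂ m - energy j₁ m) (Set.Ioi 0) := by
  intro s (hs : 0 < s) t _ hst
  have hgap (m : ℝ) : energy j₂ m - energy j₁ m = (j₂ ^ 2 - j₁ ^ 2) / (2 * m ^ 2) := by
    unfold energy; ring
  have : 0 ≤ j₂ ^ 2 - j₁ ^ 2 := by nlinarith
  simp only [hgap]
  gcongr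

lemma exists_forall_mul_sub_nonneg {α : Type*} {d g : α → ℝ} (hbelow : BddBelow (Set.range g))
    (habove : BddAbove (Set.range g)) (hsep : ∀ x y, d x < 0 → 0 < d y → g x ≤ g y) :
    ∃ c, ∀ x, 0 ≤ d x * (g x - c) := by
  obtain ⟨K, hK⟩ := habove
  have hbdd : BddBelow (insert K (g '' {y | 0 < d y})) :=
    (hbelow.mono (Set.image_subset_range _ _)).insert K
  refine ⟨sInf (insert K (g '' {y | 0 < d y})), fun x => ?_⟩
  rcases lt_trichotomy (d x) 0 with hx | hx | hx
  · refine mul_nonneg_of_nonpos_of_nonpos hx.le (sub_nonpos.2 ?_)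
    refine le_csInf (Set.insert_nonempty _ _) (Set.forall_mem_insert.2 ⟨hK ⟨x, rfl⟩, ?_⟩)
    rintro _ ⟨y, hy, rfl⟩
    exact hsep x y hx hy
  · simp [hx]
  · exact mul_nonneg hx.le (sub_nonneg.2 (csInf_le hbdd (Set.mem_insert_of_mem _ ⟨x, hx, rfl⟩)))

/-- `m` is the branch `m⁻_H` of the profile at current `j` and level `H`. -/
def IsLowerBranch (j H : ℝ) (V m : ℝ → ℝ) : Prop :=
  ∀ x, m x ∈ Set.Ioc 0 (j ^ ((2:ℝ)/3)) ∧ energy j (m x) = H - V x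

namespace IsLowerBranch

variable {j H : ℝ} {V m : ℝ → ℝ}

lemma pos (h : IsLowerBranch j H V m) (x : ℝ) : 0 < m x := (h x).1.1

lemma le_iff (h : IsLowerBranch j H V m) (hj : 0 < j) (x y : ℝ) :
    m x ≤ m y ↔ V x ≤ V y := by
  rw [← (energy_strictAntiOn hj).le_iff_ge (h y).1 (h x).1, (h x).2, (h y).2]
  exact sub_le_sub_iff_left H

lemma div_sq (h : IsLowerBranch j H V m) (x : ℝ) :
    (j / m x) ^ 2 = 2 * (H - V x - m x) := by
  have hm := (h.pos x).ne'
  rw [← (h x).2, energy]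
  field_simp
  ring

lemma div_le (h : IsLowerBranch j H V m) (x : ℝ) :
    j / m x ≤ H - V x + 1 / 2 := by
  nlinarith [h.div_sq x, h.pos x, sq_nonneg (j / m x - 1)]

lemma intervalIntegrable_div (h : IsLowerBranch j H V m) (hj : 0 ≤ j) (hV : Continuous V)
    {a b : ℝ} (hm : IntervalIntegrable m volume a b) :
    IntervalIntegrable (fun x => j / m x) volume a b := by
  have hbound : Continuous fun x => H - V x + 1 / 2 := by fun_prop
  refine (hbound.intervalIntegrable a b).mono_fun
    (aestronglyMeasurable_const.div₀ hm.def'.aestronglyMeasurable)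
    (Filter.Eventually.of_forall fun x => ?_)
  have hnonneg : 0 ≤ j / m x := div_nonneg hj (h.pos x).le
  simp only [Real.norm_eq_abs, abs_of_nonneg hnonneg,
    abs_of_nonneg (hnonneg.trans (h.div_le x))]
  exact h.div_le x

variable {j₁ j₂ H₁ H₂ : ℝ} {m₁ m₂ : ℝ → ℝ}

lemma mem_Ioc_of_le (h : IsLowerBranch j₁ H₁ V m₁) (hj₁ : 0 < j₁) (hj₁₂ : j₁ ≤ j₂) (x : ℝ) :
    m₁ x ∈ Set.Ioc 0 (j₂ ^ ((2:ℝ)/3)) :=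
  ⟨h.pos x, (h x).1.2.trans (Real.rpow_le_rpow hj₁.le hj₁₂ (by norm_num))⟩

lemma lt_of_le (h₁ : IsLowerBranch j₁ H₁ V m₁) (h₂ : IsLowerBranch j₂ H₂ V m₂)
    (hj₁ : 0 < j₁) (hj₁₂ : j₁ < j₂) (hH : H₂ ≤ H₁) (x : ℝ) : m₁ x < m₂ x := by
  refine ((energy_strictAntiOn (hj₁.trans hj₁₂)).lt_iff_gt (h₂ x).1
    (h₁.mem_Ioc_of_le hj₁ hj₁₂.le x)).1 ?_
  calc energy j₂ (m₂ x) = H₂ - V x := (h₂ x).2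
    _ ≤ H₁ - V x := by linarith
    _ = energy j₁ (m₁ x) := (h₁ x).2.symm
    _ < energy j₂ (m₁ x) := energy_lt_energy_of_lt hj₁.le hj₁₂ (h₁.pos x)

lemma le_of_le_of_le (h₁ : IsLowerBranch j₁ H₁ V m₁) (h₂ : IsLowerBranch j₂ H₂ V m₂)
    (hj₁ : 0 < j₁) (hj₁₂ : j₁ ≤ j₂) {x y : ℝ} (hV : V x ≤ V y) (hx : m₂ x ≤ m₁ x) :
    m₂ y ≤ m₁ y := by
  have hxy : m₁ x ≤ m₁ y := (h₁.le_iff hj₁ x y).2 hV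
  have hm₂x : m₂ x ∈ Set.Ioc 0 (j₁ ^ ((2:ℝ)/3)) := ⟨h₂.pos x, hx.trans (h₁ x).1.2⟩
  have hx₁ : energy j₁ (m₁ x) ≤ energy j₁ (m₂ x) :=
    ((energy_strictAntiOn hj₁).le_iff_ge (h₁ x).1 hm₂x).2 hx
  have hgap : energy j₂ (m₁ y) - energy j₁ (m₁ y) ≤ energy j₂ (m₂ x) - energy j₁ (m₂ x) :=
    energy_sub_energy_antitoneOn hj₁.le hj₁₂ (h₂.pos x) (h₁.pos y) (hx.trans hxy)
  refine ((energy_strictAntiOn (hj₁.trans_le hj₁₂)).le_iff_ge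
    (h₁.mem_Ioc_of_le hj₁ hj₁₂ y) (h₂ y).1).1 ?_
  linarith [(h₁ x).2, (h₁ y).2, (h₂ x).2, (h₂ y).2]

lemma add_div_le_add_div (h₁ : IsLowerBranch j₁ H₁ V m₁) (h₂ : IsLowerBranch j₂ H₂ V m₂)
    (hj₁ : 0 < j₁) (hj₁₂ : j₁ ≤ j₂) {x y : ℝ} (hx : m₁ x < m₂ x) (hy : m₂ y < m₁ y) :
    j₁ / m₁ y + j₂ / m₂ y ≤ j₁ / m₁ x + j₂ / m₂ x := by
  have hV : V x ≤ V y := by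
    by_contra! hV
    exact (h₁.le_of_le_of_le h₂ hj₁ hj₁₂ hV.le hy.le).not_gt hx
  have hj₂ := hj₁.trans_le hj₁₂
  have := h₁.pos x
  have := h₂.pos x
  gcongr
  · exact (h₁.le_iff hj₁ x y).2 hV
  · exact (h₂.le_iff hj₂ x y).2 hV

lemma div_sub_div_mul_add (h₁ : IsLowerBranch j₁ H₁ V m₁) (h₂ : IsLowerBranch j₂ H₂ V m₂)
    (x : ℝ) :
    (j₂ / m₂ x - j₁ / m₁ x) * (j₁ / m₁ x + j₂ / m₂ x) = 2 * (H₂ - H₁) + 2 * (m₁ x - m₂ x) := by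
  linear_combination h₂.div_sq x - h₁.div_sq x

lemma lt_of_integral_eq (h₁ : IsLowerBranch j₁ H₁ V m₁) (h₂ : IsLowerBranch j₂ H₂ V m₂)
    (hj₁ : 0 < j₁) (hj₁₂ : j₁ < j₂) {a b : ℝ} (hab : a < b)
    (hm₁ : IntervalIntegrable m₁ volume a b) (hm₂ : IntervalIntegrable m₂ volume a b)
    (hmass : ∫ x in a..b, m₁ x = ∫ x in a..b, m₂ x) : H₁ < H₂ := by
  by_contra! hH
  have := intervalIntegral.intervalIntegral_pos_of_pos_on (hm₂.sub hm₁)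
    (fun x _ => sub_pos.2 (h₁.lt_of_le h₂ hj₁ hj₁₂ hH x)) hab
  rw [intervalIntegral.integral_sub hm₂ hm₁, hmass, sub_self] at this
  exact this.false

lemma integral_div_lt_integral_div (h₁ : IsLowerBranch j₁ H₁ V m₁)
    (h₂ : IsLowerBranch j₂ H₂ V m₂) (hj₁ : 0 < j₁) (hj₁₂ : j₁ < j₂) (hV : Continuous V)
    {a b : ℝ} (hab : a < b) (hm₁ : IntervalIntegrable m₁ volume a b)
    (hm₂ : IntervalIntegrable m₂ volume a b)
    (hmass : ∫ x in a..b, m₁ x = ∫ x in a..b, m₂ x) :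
    ∫ x in a..b, j₁ / m₁ x < ∫ x in a..b, j₂ / m₂ x := by
  have hj₂ := hj₁.trans hj₁₂
  have hH := h₁.lt_of_integral_eq h₂ hj₁ hj₁₂ hab hm₁ hm₂ hmass
  have hp₁ (x : ℝ) : 0 < j₁ / m₁ x := div_pos hj₁ (h₁.pos x)
  have hp₂ (x : ℝ) : 0 < j₂ / m₂ x := div_pos hj₂ (h₂.pos x)
  set g : ℝ → ℝ := fun x => (j₁ / m₁ x + j₂ / m₂ x)⁻¹
  have hg_pos (x : ℝ) : 0 < g x := inv_pos.2 (add_pos (hp₁ x) (hp₂ x))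
  have hg_le (x : ℝ) : g x ≤ j₁ ^ ((2:ℝ)/3) / j₁ :=
    calc g x ≤ (j₁ / m₁ x)⁻¹ := inv_anti₀ (hp₁ x) (le_add_of_nonneg_right (hp₂ x).le)
      _ = m₁ x / j₁ := inv_div _ _
      _ ≤ j₁ ^ ((2:ℝ)/3) / j₁ := by gcongr; exact (h₁ x).1.2
  obtain ⟨c, hc⟩ := exists_forall_mul_sub_nonneg (d := fun x => m₁ x - m₂ x)
    ⟨0, by rintro _ ⟨x, rfl⟩; exact (hg_pos x).le⟩ ⟨_, by rintro _ ⟨x, rfl⟩; exact hg_le x⟩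
    fun x y hx hy => inv_anti₀ (add_pos (hp₁ y) (hp₂ y))
      (h₁.add_div_le_add_div h₂ hj₁ hj₁₂.le (sub_neg.1 hx) (sub_pos.1 hy))
  -- the integrand below equals `2 (H₂ - H₁) g + 2 (m₁ - m₂) (g - c)`
  have hpt (x : ℝ) : 0 < j₂ / m₂ x - j₁ / m₁ x - 2 * c * (m₁ x - m₂ x) := by
    have hdiff : j₂ / m₂ x - j₁ / m₁ x = (2 * (H₂ - H₁) + 2 * (m₁ x - m₂ x)) * g x :=
      (eq_mul_inv_iff_mul_eq₀ (add_pos (hp₁ x) (hp₂ x)).ne').2 (h₁.div_sub_div_mul_add h₂ x)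
    nlinarith [hc x, mul_pos (sub_pos.2 hH) (hg_pos x)]
  have hp₁i := h₁.intervalIntegrable_div hj₁.le hV hm₁
  have hp₂i := h₂.intervalIntegrable_div hj₂.le hV hm₂
  have hdi := (hm₁.sub hm₂).const_mul (2 * c)
  have hpos := intervalIntegral.intervalIntegral_pos_of_pos_on ((hp₂i.sub hp₁i).sub hdi)
    (fun x _ => hpt x) hab
  rw [intervalIntegral.integral_sub (hp₂i.sub hp₁i) hdi, intervalIntegral.integral_sub hp₂i hp₁i,
    intervalIntegral.integral_const_mul, intervalIntegral.integral_sub hm₁ hm₂, hmass] at hpos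
  linarith

end IsLowerBranch

theorem stmt_19_general
    (V : ℝ → ℝ) (hVc : Continuous V)
    (M : ℝ)
    (mm : ℝ → ℝ → ℝ → ℝ)
    (hmm : ∀ j H x, 0 < j → M + 3 / 2 * j ^ ((2:ℝ)/3) ≤ H →
      0 < mm j H x ∧ mm j H x ≤ j ^ ((2:ℝ)/3) ∧
      j ^ 2 / (2 * (mm j H x) ^ 2) + mm j H x = H - V x)
    (j₁ j₂ : ℝ) (hj₁ : 0 < j₁) (hj₁₂ : j₁ < j₂)
    (H₁ H₂ : ℝ)
    (hH₁cr : M + 3 / 2 * j₁ ^ ((2:ℝ)/3) ≤ H₁)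
    (hH₁ : (∫ x in (0:ℝ)..1, mm j₁ H₁ x) = 1)
    (hH₂cr : M + 3 / 2 * j₂ ^ ((2:ℝ)/3) ≤ H₂)
    (hH₂ : (∫ x in (0:ℝ)..1, mm j₂ H₂ x) = 1) :
    (∫ y in (0:ℝ)..1, j₁ / mm j₁ H₁ y) < (∫ y in (0:ℝ)..1, j₂ / mm j₂ H₂ y) := by
  have branch {j H : ℝ} (hj : 0 < j) (hH : M + 3 / 2 * j ^ ((2:ℝ)/3) ≤ H) :
      IsLowerBranch j H V (mm j H) := fun x =>
    have ⟨hpos, hle, heq⟩ := hmm j H x hj hH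
    ⟨⟨hpos, hle⟩, heq⟩
  exact (branch hj₁ hH₁cr).integral_div_lt_integral_div (branch (hj₁.trans hj₁₂) hH₂cr) hj₁
    hj₁₂ hVc zero_lt_one (intervalIntegral.intervalIntegrable_of_integral_ne_zero (by simp [hH₁]))
    (intervalIntegral.intervalIntegrable_of_integral_ne_zero (by simp [hH₂])) (hH₁.trans hH₂.symm)

/-- strict monotonicity of the current-to-momentum map in the
high-current regime: with the notation of STATEMENT 18 and
`p_{jᵢ} := ∫₀¹ jᵢ / m⁻_{H̄_{jᵢ}}`, one has `p_{j₁} < p_{j₂}`. -/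
theorem stmt_19
    (V : ℝ → ℝ) (hVc : Continuous V) (hVp : Function.Periodic V 1)
    (M : ℝ) (hM : IsGreatest (Set.range V) M)
    (mm : ℝ → ℝ → ℝ → ℝ)
    (hmm : ∀ j H x, 0 < j → M + 3 / 2 * j ^ ((2:ℝ)/3) ≤ H →
      0 < mm j H x ∧ mm j H x ≤ j ^ ((2:ℝ)/3) ∧
      j ^ 2 / (2 * (mm j H x) ^ 2) + mm j H x = H - V x)
    (j₁ j₂ : ℝ) (hj₁ : 0 < j₁) (hj₁₂ : j₁ < j₂)
    (hα : 1 ≤ ∫ x in (0:ℝ)..1, mm j₁ (M + 3 / 2 * j₁ ^ ((2:ℝ)/3)) x)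
    (H₁ H₂ : ℝ)
    (hH₁cr : M + 3 / 2 * j₁ ^ ((2:ℝ)/3) ≤ H₁)
    (hH₁ : (∫ x in (0:ℝ)..1, mm j₁ H₁ x) = 1)
    (hH₂cr : M + 3 / 2 * j₂ ^ ((2:ℝ)/3) ≤ H₂)
    (hH₂ : (∫ x in (0:ℝ)..1, mm j₂ H₂ x) = 1) :
    (∫ y in (0:ℝ)..1, j₁ / mm j₁ H₁ y) < (∫ y in (0:ℝ)..1, j₂ / mm j₂ H₂ y) :=
  stmt_19_general V hVc M mm hmm j₁ j₂ hj₁ hj₁₂ H₁ H₂ hH₁cr hH₁ hH₂cr hH₂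
end
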